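/- arXiv:2108.00330 — 7 statements merged into one kernel-verified Lean document; each statement's English description precedes it below -/
import Mathlib

section
/- Let f, g : ℝ^p × ℝ^q → ℝ be twice continuously differentiable and let μ > 0 be such that for every x ∈ ℝ^p the function y ↦ g(x,y) is μ-strongly convex; let y*(x) denote its unique minimizer. Then the function Φ(x) := f(x, y*(x)) is differentiable on ℝ^p and, for every x, ∇Φ(x) = ∇_x f(x, y*(x)) − ∇_x∇_y g(x, y*(x)) · v*(x), where v*(x) is the unique solution of the linear system ∇²_y g(x, y*(x)) v = ∇_y f(x, y*(x)) in ℝ^q (the Hessian is invertible because ∇²_y g(x, y*(x)) ⪰ μI by strong convexity). -/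
/-!
Strong convexity makes `∇_y g(x, ·)` strongly monotone. Hence its derivative `∇²_y g` is
coercive, so invertible by Lax–Milgram, and the minimizer `y*(x)` depends continuously on `x`.
The implicit function theorem for `∇_y g(x, y) = 0`, applied to this continuous solution, gives
`Dy*(x) = -(∇²_y g)⁻¹ (∇ₓ∇_y g)ᵀ`. The chain rule yields `∇Φ = ∇ₓ f + (Dy*)ᵀ ∇_y f`, and the
symmetry of the Hessian turns `(Dy*)ᵀ ∇_y f` into `-(∇ₓ∇_y g) v*`.
-/

open scoped RealInnerProductSpace

noncomputable section

abbrev Euc (n : ℕ) : Type := EuclideanSpace ℝ (Fin n)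

variable {p q : ℕ}

/-- The partial gradient `∇ₓ f(x,y)`. -/
noncomputable def gradX (f : Euc p × Euc q → ℝ) (x : Euc p) (y : Euc q) : Euc p :=
  gradient (fun x' => f (x', y)) x

/-- The partial gradient `∇_y f(x,y)`. -/
noncomputable def gradY (f : Euc p × Euc q → ℝ) (x : Euc p) (y : Euc q) : Euc q :=
  gradient (fun y' => f (x, y')) y

/-- The Hessian `∇²_y g(x,y)` of `y ↦ g(x,y)`, as a continuous linear map. -/
noncomputable def hessY (g : Euc p × Euc q → ℝ) (x : Euc p) (y : Euc q) :
    Euc q →L[ℝ] Euc q :=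
  fderiv ℝ (fun y' => gradY g x y') y

/-- The Fréchet derivative in `x` of `x ↦ ∇_y g(x,y)`; the paper's mixed second
derivative matrix `∇ₓ∇_y g(x,y)` is its adjoint. -/
noncomputable def mixXY (g : Euc p × Euc q → ℝ) (x : Euc p) (y : Euc q) :
    Euc p →L[ℝ] Euc q :=
  fderiv ℝ (fun x' => gradY g x' y) x

open InnerProductSpace Filter Topology ContinuousLinearMap

section InnerProductSpace

variable {E : Type*} [NormedAddCommGroup E] [InnerProductSpace ℝ E]

theorem strongMonotone_of_strongConvex {φ : E → ℝ} {G : E → E} {μ : ℝ}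
    (h : ∀ y y', φ y + ⟪G y, y' - y⟫ + μ / 2 * ‖y' - y‖ ^ 2 ≤ φ y') (y y' : E) :
    μ * ‖y' - y‖ ^ 2 ≤ ⟪G y' - G y, y' - y⟫ := by
  have h₁ := h y y'
  have h₂ := h y' y
  rw [norm_sub_rev, ← neg_sub y' y, inner_neg_right] at h₂
  rw [inner_sub_left]
  linarith

theorem mul_norm_sub_le_of_strongMonotone {G : E → E} {μ : ℝ} {y y' : E}
    (h : μ * ‖y' - y‖ ^ 2 ≤ ⟪G y' - G y, y' - y⟫) : μ * ‖y' - y‖ ≤ ‖G y' - G y‖ := by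
  rcases (norm_nonneg (y' - y)).eq_or_lt with h0 | hpos
  · rw [← h0, mul_zero]
    exact norm_nonneg _
  · refine le_of_mul_le_mul_right ?_ hpos
    calc μ * ‖y' - y‖ * ‖y' - y‖ = μ * ‖y' - y‖ ^ 2 := by ring
      _ ≤ ⟪G y' - G y, y' - y⟫ := h
      _ ≤ ‖G y' - G y‖ * ‖y' - y‖ := real_inner_le_norm _ _

theorem continuousAt_of_strongMonotone_of_apply_eq_zero {X : Type*} [TopologicalSpace X]
    {G : X → E → E} {φ : X → E} {μ : ℝ} {x₀ : X} (hμ : 0 < μ)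
    (hmono : ∀ x y y', μ * ‖y' - y‖ ^ 2 ≤ ⟪G x y' - G x y, y' - y⟫)
    (hzero : ∀ x, G x (φ x) = 0) (hG : ContinuousAt (fun x => G x (φ x₀)) x₀) :
    ContinuousAt φ x₀ := by
  have hbound : ∀ x, ‖φ x - φ x₀‖ ≤ μ⁻¹ * ‖G x (φ x₀)‖ := fun x => by
    have := mul_norm_sub_le_of_strongMonotone (hmono x (φ x) (φ x₀))
    rw [hzero, sub_zero, norm_sub_rev] at this
    rwa [le_inv_mul_iff₀ hμ]
  have hlim : Tendsto (fun x => μ⁻¹ * ‖G x (φ x₀)‖) (𝓝 x₀) (𝓝 0) := by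
    simpa [hzero] using (hG.tendsto.norm.const_mul μ⁻¹)
  rw [ContinuousAt, tendsto_iff_norm_sub_tendsto_zero]
  exact squeeze_zero (fun _ => norm_nonneg _) hbound hlim

theorem coercive_of_hasFDerivAt_of_strongMonotone {G : E → E} {L : E →L[ℝ] E} {y : E} {μ : ℝ}
    (hG : HasFDerivAt G L y) (hmono : ∀ y', μ * ‖y' - y‖ ^ 2 ≤ ⟪G y' - G y, y' - y⟫)
    (v : E) : μ * ‖v‖ ^ 2 ≤ ⟪L v, v⟫ := by
  have hline : HasDerivAt (fun t : ℝ => y + t • v) v 0 := by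
    simpa using ((hasDerivAt_id (0 : ℝ)).smul_const v).const_add y
  have hderiv : HasDerivAt (fun t : ℝ => ⟪v, G (y + t • v)⟫) ⟪v, L v⟫ 0 :=
    (innerSL ℝ v).hasFDerivAt.comp_hasDerivAt 0 (hG.comp_hasDerivAt_of_eq 0 hline (by simp))
  rw [real_inner_comm]
  refine ge_of_tendsto ((hasDerivAt_iff_tendsto_slope.mp hderiv).mono_left (nhdsGT_le_nhdsNE 0)) ?_
  filter_upwards [self_mem_nhdsWithin] with t (ht : 0 < t)
  have h := hmono (y + t • v)
  rw [add_sub_cancel_left, norm_smul, Real.norm_of_nonneg ht.le, real_inner_smul_right,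
    real_inner_comm, inner_sub_right] at h
  simp only [slope_def_field, sub_zero, zero_smul, add_zero]
  rw [le_div_iff₀ ht]
  refine le_of_mul_le_mul_left ?_ ht
  linear_combination h

theorem isInvertible_of_coercive [CompleteSpace E] {T : E →L[ℝ] E} {μ : ℝ} (hμ : 0 < μ)
    (hT : ∀ v, μ * ‖v‖ ^ 2 ≤ ⟪T v, v⟫) : T.IsInvertible := by
  have hB : IsCoercive ((innerSL ℝ).comp T) :=
    ⟨μ, hμ, fun v => by simpa [sq, mul_assoc] using hT v⟩
  refine ⟨hB.continuousLinearEquivOfBilin, ?_⟩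
  ext v
  exact ext_inner_right ℝ fun w => by simp

theorem isSelfAdjoint_fderiv_gradient [CompleteSpace E] {φ : E → ℝ} {y : E}
    (hφ : ContDiffAt ℝ 2 φ y) : IsSelfAdjoint (fderiv ℝ (gradient φ) y) := by
  have hd : DifferentiableAt ℝ (fderiv ℝ φ) y :=
    (hφ.fderiv_right (m := 1) (by norm_num)).differentiableAt one_ne_zero
  have hH (c : E) :
      fderiv ℝ (gradient φ) y c = (toDual ℝ E).symm (fderiv ℝ (fderiv ℝ φ) y c) := by
    rw [show gradient φ = (toDual ℝ E).symm ∘ fderiv ℝ φ from rfl,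
      ((toDual ℝ E).symm.hasFDerivAt.comp y hd.hasFDerivAt).fderiv]
    rfl
  rw [isSelfAdjoint_iff_isSymmetric]
  intro a b
  change ⟪fderiv ℝ (gradient φ) y a, b⟫ = ⟪a, fderiv ℝ (gradient φ) y b⟫
  rw [hH, hH, toDual_symm_apply, real_inner_comm, toDual_symm_apply]
  exact hφ.isSymmSndFDerivAt (by simp) a b

end InnerProductSpace

theorem adjoint_neg_inverse_comp_apply_self {E F : Type*} [NormedAddCommGroup E]
    [InnerProductSpace ℝ E] [CompleteSpace E] [NormedAddCommGroup F] [InnerProductSpace ℝ F]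
    [CompleteSpace F] {H : F →L[ℝ] F} {M : E →L[ℝ] F} (hH : H.IsInvertible)
    (hHs : IsSelfAdjoint H) (v : F) : adjoint (-(H.inverse ∘L M)) (H v) = -adjoint M v := by
  have hcomp : H ∘L (-(H.inverse ∘L M)) = -M := by
    rw [comp_neg, ← comp_assoc, hH.self_comp_inverse, id_comp]
  calc adjoint (-(H.inverse ∘L M)) (H v) = adjoint (H ∘L (-(H.inverse ∘L M))) v := by
        rw [adjoint_comp, hHs.adjoint_eq]; rfl
    _ = -adjoint M v := by rw [hcomp, map_neg]; rfl

theorem HasStrictFDerivAt.hasFDerivAt_of_apply_eq {𝕜 : Type*} [NontriviallyNormedField 𝕜]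
    {E₁ E₂ F : Type*} [NormedAddCommGroup E₁] [NormedSpace 𝕜 E₁] [CompleteSpace E₁]
    [NormedAddCommGroup E₂] [NormedSpace 𝕜 E₂] [CompleteSpace E₂]
    [NormedAddCommGroup F] [NormedSpace 𝕜 F] [CompleteSpace F]
    {Ψ : E₁ × E₂ → F} {Ψ' : E₁ × E₂ →L[𝕜] F} {φ : E₁ → E₂} {x₀ : E₁}
    (hΨ : HasStrictFDerivAt Ψ Ψ' (x₀, φ x₀)) (hΨ₂ : (Ψ' ∘L inr 𝕜 E₁ E₂).IsInvertible)
    (hφ : ContinuousAt φ x₀) (hlevel : ∀ᶠ x in 𝓝 x₀, Ψ (x, φ x) = Ψ (x₀, φ x₀)) :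
    HasFDerivAt φ (-(Ψ' ∘L inr 𝕜 E₁ E₂).inverse ∘L (Ψ' ∘L inl 𝕜 E₁ E₂)) x₀ := by
  have hgraph : Tendsto (fun x => (x, φ x)) (𝓝 x₀) (𝓝 (x₀, φ x₀)) := tendsto_id.prodMk_nhds hφ
  refine (hΨ.hasStrictFDerivAt_implicitFunctionOfProdDomain hΨ₂).hasFDerivAt
    |>.congr_of_eventuallyEq ?_
  filter_upwards [hgraph.eventually (hΨ.eventually_apply_eq_iff_implicitFunctionOfProdDomain hΨ₂),
    hlevel] with x hiff hx
  exact (hiff.mp hx).symm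

section PartialFDeriv

variable {𝕜 : Type*} [NontriviallyNormedField 𝕜] {E₁ E₂ F : Type*}
  [NormedAddCommGroup E₁] [NormedSpace 𝕜 E₁] [NormedAddCommGroup E₂] [NormedSpace 𝕜 E₂]
  [NormedAddCommGroup F] [NormedSpace 𝕜 F] {f : E₁ × E₂ → F} {f' : E₁ × E₂ →L[𝕜] F}
  {x : E₁} {y : E₂}

theorem HasFDerivAt.partial_left (hf : HasFDerivAt f f' (x, y)) :
    HasFDerivAt (fun x' => f (x', y)) (f' ∘L inl 𝕜 E₁ E₂) x :=
  hf.comp x (hasFDerivAt_prodMk_left x y)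

theorem HasFDerivAt.partial_right (hf : HasFDerivAt f f' (x, y)) :
    HasFDerivAt (fun y' => f (x, y')) (f' ∘L inr 𝕜 E₁ E₂) y :=
  hf.comp y (hasFDerivAt_prodMk_right x y)

end PartialFDeriv

section PartialGradients

variable {f g : Euc p × Euc q → ℝ} {x : Euc p} {y : Euc q}

theorem inner_gradX_add_inner_gradY (hf : DifferentiableAt ℝ f (x, y)) (u : Euc p) (w : Euc q) :
    ⟪gradX f x y, u⟫ + ⟪gradY f x y, w⟫ = fderiv ℝ f (x, y) (u, w) := by
  rw [gradX, gradY, gradient, gradient, toDual_symm_apply, toDual_symm_apply,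
    hf.hasFDerivAt.partial_left.fderiv, hf.hasFDerivAt.partial_right.fderiv, comp_apply, comp_apply,
    ← map_add, inl_apply, inr_apply, Prod.mk_add_mk, add_zero, zero_add]

theorem gradY_eq_toDual_symm (hg : DifferentiableAt ℝ g (x, y)) :
    gradY g x y = (toDual ℝ (Euc q)).symm (fderiv ℝ g (x, y) ∘L inr ℝ (Euc p) (Euc q)) := by
  rw [gradY, gradient, hg.hasFDerivAt.partial_right.fderiv]

theorem contDiff_gradY (hg : ContDiff ℝ 2 g) :
    ContDiff ℝ 1 (fun z : Euc p × Euc q => gradY g z.1 z.2) := by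
  have h : (fun z : Euc p × Euc q => gradY g z.1 z.2) =
      fun z => (toDual ℝ (Euc q)).symm (fderiv ℝ g z ∘L inr ℝ (Euc p) (Euc q)) :=
    funext fun z => gradY_eq_toDual_symm (hg.differentiable two_ne_zero z)
  rw [h]
  exact (toDual ℝ (Euc q)).symm.contDiff.comp
    ((hg.fderiv_right (m := 1) (by norm_num)).clm_comp contDiff_const)

theorem hessY_eq_fderiv_comp_inr
    (hG : DifferentiableAt ℝ (fun z : Euc p × Euc q => gradY g z.1 z.2) (x, y)) :
    hessY g x y = fderiv ℝ (fun z : Euc p × Euc q => gradY g z.1 z.2) (x, y) ∘L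
      inr ℝ (Euc p) (Euc q) :=
  hG.hasFDerivAt.partial_right.fderiv

theorem mixXY_eq_fderiv_comp_inl
    (hG : DifferentiableAt ℝ (fun z : Euc p × Euc q => gradY g z.1 z.2) (x, y)) :
    mixXY g x y = fderiv ℝ (fun z : Euc p × Euc q => gradY g z.1 z.2) (x, y) ∘L
      inl ℝ (Euc p) (Euc q) :=
  hG.hasFDerivAt.partial_left.fderiv

theorem gradY_eq_zero_of_forall_le (hmin : ∀ y', g (x, y) ≤ g (x, y')) : gradY g x y = 0 := by
  rw [gradY, gradient, IsLocalMin.fderiv_eq_zero (Eventually.of_forall hmin), map_zero]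

theorem isSelfAdjoint_hessY (hg : ContDiff ℝ 2 g) (x : Euc p) (y : Euc q) :
    IsSelfAdjoint (hessY g x y) :=
  isSelfAdjoint_fderiv_gradient (hg.comp (contDiff_const.prodMk contDiff_id)).contDiffAt

theorem isInvertible_hessY {μ : ℝ} (hμ : 0 < μ) (hg : ContDiff ℝ 2 g)
    (hsc : ∀ y y', g (x, y) + ⟪gradY g x y, y' - y⟫ + μ / 2 * ‖y' - y‖ ^ 2 ≤ g (x, y')) :
    (hessY g x y).IsInvertible := by
  have hd : HasFDerivAt (gradY g x) (hessY g x y) y :=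
    ((contDiff_gradY hg).differentiable one_ne_zero (x, y)).hasFDerivAt.partial_right
      |>.differentiableAt.hasFDerivAt
  exact isInvertible_of_coercive hμ
    (coercive_of_hasFDerivAt_of_strongMonotone hd (strongMonotone_of_strongConvex hsc y))

theorem hasGradientAt_comp_prodMk {φ : Euc p → Euc q} {D : Euc p →L[ℝ] Euc q}
    (hf : DifferentiableAt ℝ f (x, φ x)) (hφ : HasFDerivAt φ D x) :
    HasGradientAt (fun x' => f (x', φ x')) (gradX f x (φ x) + adjoint D (gradY f x (φ x))) x := by
  rw [hasGradientAt_iff_hasFDerivAt]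
  refine (hf.hasFDerivAt.comp x ((hasFDerivAt_id x).prodMk hφ)).congr_fderiv ?_
  ext u
  rw [toDual_apply_apply, inner_add_left, adjoint_inner_left, inner_gradX_add_inner_gradY hf]
  rfl

end PartialGradients

theorem hasFDerivAt_argmin {g : Euc p × Euc q → ℝ} {μ : ℝ} (hμ : 0 < μ) (hg : ContDiff ℝ 2 g)
    (hsc : ∀ (x : Euc p) (y y' : Euc q),
      g (x, y) + ⟪gradY g x y, y' - y⟫ + μ / 2 * ‖y' - y‖ ^ 2 ≤ g (x, y'))
    {ystar : Euc p → Euc q} (hmin : ∀ x y, g (x, ystar x) ≤ g (x, y)) (x : Euc p) :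
    HasFDerivAt ystar (-(hessY g x (ystar x)).inverse ∘L mixXY g x (ystar x)) x := by
  set G : Euc p × Euc q → Euc q := fun z => gradY g z.1 z.2
  have hG : ContDiff ℝ 1 G := contDiff_gradY hg
  have hGx := hG.differentiable one_ne_zero (x, ystar x)
  have hcrit : ∀ x', G (x', ystar x') = 0 := fun x' => gradY_eq_zero_of_forall_le (hmin x')
  have hcont : ContinuousAt ystar x :=
    continuousAt_of_strongMonotone_of_apply_eq_zero hμ
      (fun x' => strongMonotone_of_strongConvex (hsc x')) hcrit
      (hG.continuous.comp (continuous_id.prodMk continuous_const)).continuousAt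
  have h := (hG.contDiffAt.hasStrictFDerivAt one_ne_zero).hasFDerivAt_of_apply_eq
    (by rw [← hessY_eq_fderiv_comp_inr hGx]; exact isInvertible_hessY hμ hg (hsc x)) hcont
    (Eventually.of_forall fun x' => (hcrit x').trans (hcrit x).symm)
  rwa [← hessY_eq_fderiv_comp_inr hGx, ← mixXY_eq_fderiv_comp_inl hGx] at h

/-- Proposition 2.1: the hypergradient formula.  If `g(x,·)` is
`μ`-strongly convex with minimizer `y*(x)`, then `Φ(x) = f(x, y*(x))` is differentiable
and `∇Φ(x) = ∇ₓ f(x,y*(x)) − ∇ₓ∇_y g(x,y*(x)) v*(x)`, where `v*(x)` is the unique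
solution of `∇²_y g(x,y*(x)) v = ∇_y f(x,y*(x))`. -/
theorem hypergradient_formula (p q : ℕ) (f g : Euc p × Euc q → ℝ) (μ : ℝ) (hμ : 0 < μ)
    (hf : ContDiff ℝ 2 f) (hg : ContDiff ℝ 2 g)
    (hsc : ∀ (x : Euc p) (y y' : Euc q),
      g (x, y) + ⟪gradY g x y, y' - y⟫ + μ / 2 * ‖y' - y‖ ^ 2 ≤ g (x, y'))
    (ystar : Euc p → Euc q) (hmin : ∀ x y, g (x, ystar x) ≤ g (x, y)) :
    Differentiable ℝ (fun x => f (x, ystar x)) ∧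
    (∀ x, ∃! v : Euc q, (hessY g x (ystar x)) v = gradY f x (ystar x)) ∧
    (∀ (x : Euc p) (v : Euc q), (hessY g x (ystar x)) v = gradY f x (ystar x) →
      gradient (fun x' => f (x', ystar x')) x =
        gradX f x (ystar x) - (ContinuousLinearMap.adjoint (mixXY g x (ystar x))) v) := by
  have hH : ∀ x, (hessY g x (ystar x)).IsInvertible := fun x => isInvertible_hessY hμ hg (hsc x)
  have hΦ := fun x => hasGradientAt_comp_prodMk (hf.differentiable two_ne_zero (x, ystar x))
    (hasFDerivAt_argmin hμ hg hsc hmin x)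
  refine ⟨fun x => (hΦ x).differentiableAt, fun x => (hH x).bijective.existsUnique _,
    fun x v hv => ?_⟩
  rw [(hΦ x).gradient, ← hv,
    adjoint_neg_inverse_comp_apply_self (hH x) (isSelfAdjoint_hessY hg x (ystar x)), sub_eq_add_neg]
end
end

section
/- Let d ≥ 5, let λ > 0 and τ > 0, and let r ∈ (0,1) be a root of the quartic equation 1 − (4+λ)r + (6+2λ+τ)r² − (4+λ)r³ + r⁴ = 0. Let A be the d×d real matrix with A_{1,1} = 1, A_{i,i} = 2 for 2 ≤ i ≤ d, A_{i,i+1} = A_{i+1,i} = −1 for 1 ≤ i ≤ d−1, and all other entries 0. Define b̃ ∈ ℝ^d by b̃_1 = (2+λ+τ)r − (3+λ)r² + r³, b̃_2 = r − 1, and b̃_t = 0 for 3 ≤ t ≤ d. Since A is symmetric positive semidefinite and τ > 0, the matrix A² + λA + τI is invertible; let x* be the unique solution of (A² + λA + τI)x = b̃, and let x̂ ∈ ℝ^d be the vector with coordinates x̂_i = r^i for 1 ≤ i ≤ d. Then ‖x̂ − x*‖ ≤ ((7+λ)/τ)·r^d. -/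
open Matrix

/-- Extension of a vector on `Fin d` to `ℕ` by zero. -/
def ext' (d : ℕ) (w : Fin d → ℝ) : ℕ → ℝ := fun n => if h : n < d then w ⟨n, h⟩ else 0

lemma ext'_lt (d : ℕ) (w : Fin d → ℝ) (n : ℕ) (h : n < d) : ext' d w n = w ⟨n, h⟩ := dif_pos h

lemma ext'_ge (d : ℕ) (w : Fin d → ℝ) (n : ℕ) (h : ¬ n < d) : ext' d w n = 0 := dif_neg h

lemma sum_fin_ite (d m : ℕ) (g : ℕ → ℝ) :
    (∑ j : Fin d, if (j : ℕ) = m then g j else 0) = if m < d then g m else 0 := by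
  rw [Fin.sum_univ_eq_sum_range (fun k => if k = m then g k else 0)]
  rw [Finset.sum_ite_eq' (Finset.range d) m g]
  simp [Finset.mem_range]

lemma sum_fin_ite' (d m : ℕ) (hm : m < d) (y : Fin d → ℝ) (c : ℝ) :
    (∑ j : Fin d, y j * (if (j : ℕ) = m then c else 0)) = y ⟨m, hm⟩ * c := by
  have h1 : ∀ j : Fin d, y j * (if (j : ℕ) = m then c else 0)
      = (if (j : ℕ) = m then ext' d y (j : ℕ) * c else 0) := by
    intro j
    rw [ext'_lt d y _ j.2]
    split_ifs <;> simp
  rw [Finset.sum_congr rfl (fun j _ => h1 j),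
    sum_fin_ite d m (fun k => ext' d y k * c), if_pos hm, ext'_lt d y m hm]

lemma tri_mulVec (d : ℕ) (A : Matrix (Fin d) (Fin d) ℝ)
    (hA : ∀ i j : Fin d, A i j =
      if (i : ℕ) = (j : ℕ) then (if (i : ℕ) = 0 then 1 else 2)
      else if (i : ℕ) + 1 = (j : ℕ) ∨ (j : ℕ) + 1 = (i : ℕ) then -1 else 0)
    (w : Fin d → ℝ) (i : Fin d) :
    A.mulVec w i = (if (i : ℕ) = 0 then 1 else 2) * ext' d w i
      - ext' d w ((i : ℕ) + 1) - (if (i : ℕ) = 0 then 0 else ext' d w ((i : ℕ) - 1)) := by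
  have hw : ∀ j : Fin d, w j = ext' d w j := by
    intro j; simp [ext', j.2]
  have step1 : A.mulVec w i =
      ∑ j : Fin d, ((if (j : ℕ) = (i : ℕ) then (if (i : ℕ) = 0 then 1 else 2) * ext' d w j else 0)
        + ((if (j : ℕ) = (i : ℕ) + 1 then -ext' d w j else 0)
        + (if (j : ℕ) = (i : ℕ) - 1 then (if (i : ℕ) = 0 then 0 else -ext' d w j) else 0))) := by
    simp only [Matrix.mulVec, dotProduct]
    refine Finset.sum_congr rfl fun j _ => ?_
    show A i j * w j = _
    rw [hA, hw]
    split_ifs <;> first | ring1 | (exfalso; omega)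
  rw [step1, Finset.sum_add_distrib, Finset.sum_add_distrib,
    sum_fin_ite d (i : ℕ) (fun k => (if (i : ℕ) = 0 then 1 else 2) * ext' d w k),
    sum_fin_ite d ((i : ℕ) + 1) (fun k => -ext' d w k),
    sum_fin_ite d ((i : ℕ) - 1) (fun k => if (i : ℕ) = 0 then 0 else -ext' d w k)]
  have h1 : (i : ℕ) < d := i.2
  have h3 : (i : ℕ) - 1 < d := by omega
  rw [if_pos h1, if_pos h3]
  have h2 : (if (i : ℕ) + 1 < d then -ext' d w ((i : ℕ) + 1) else 0) = -ext' d w ((i : ℕ) + 1) := by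
    split_ifs with h
    · rfl
    · simp [ext', h]
  rw [h2]
  split_ifs <;> ring

lemma quad_aux (Y : ℕ → ℝ) (n : ℕ) :
    Y 0 * (Y 0 - Y 1) + ∑ k ∈ Finset.range n, Y (k+1) * (2 * Y (k+1) - Y (k+1+1) - Y k)
      = (∑ k ∈ Finset.range n, (Y k - Y (k+1))^2) + Y n ^ 2 - Y n * Y (n+1) := by
  induction n with
  | zero => simp; ring
  | succ m ih =>
    rw [Finset.sum_range_succ, Finset.sum_range_succ]
    linear_combination ih

lemma tri_symm (d : ℕ) (A : Matrix (Fin d) (Fin d) ℝ)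
    (hA : ∀ i j : Fin d, A i j =
      if (i : ℕ) = (j : ℕ) then (if (i : ℕ) = 0 then 1 else 2)
      else if (i : ℕ) + 1 = (j : ℕ) ∨ (j : ℕ) + 1 = (i : ℕ) then -1 else 0) :
    Aᵀ = A := by
  ext i j
  rw [Matrix.transpose_apply, hA i j, hA j i]
  split_ifs <;> first | rfl | (exfalso; omega)

lemma tri_psd (d : ℕ) (A : Matrix (Fin d) (Fin d) ℝ)
    (hA : ∀ i j : Fin d, A i j =
      if (i : ℕ) = (j : ℕ) then (if (i : ℕ) = 0 then 1 else 2)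
      else if (i : ℕ) + 1 = (j : ℕ) ∨ (j : ℕ) + 1 = (i : ℕ) then -1 else 0)
    (y : Fin d → ℝ) : 0 ≤ y ⬝ᵥ A.mulVec y := by
  rcases Nat.eq_zero_or_pos d with h | h
  · subst h; simp [dotProduct]
  obtain ⟨n, rfl⟩ : ∃ n, d = n + 1 := ⟨d - 1, by omega⟩
  have hYe : ∀ j : Fin (n+1), y j = ext' (n+1) y j := by
    intro j; simp [ext', j.2]
  have e1 : y ⬝ᵥ A.mulVec y = ∑ k ∈ Finset.range (n+1),
      (fun k => ext' (n+1) y k * ((if k = 0 then 1 else 2) * ext' (n+1) y k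
        - ext' (n+1) y (k+1) - (if k = 0 then 0 else ext' (n+1) y (k-1)))) k := by
    rw [← Fin.sum_univ_eq_sum_range]
    simp only [dotProduct]
    exact Finset.sum_congr rfl fun i _ => by rw [tri_mulVec (n+1) A hA y i, hYe i]
  rw [e1, Finset.sum_range_succ']
  simp only [Nat.succ_ne_zero, if_false, ite_false, Nat.add_sub_cancel, eq_self_iff_true,
    if_true, ite_true, zero_add, one_mul, sub_zero]
  have h4 := quad_aux (ext' (n+1) y) n
  have h5 : ext' (n+1) y (n+1) = 0 := ext'_ge (n+1) y (n+1) (by omega)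
  rw [h5] at h4
  have h6 : 0 ≤ ∑ k ∈ Finset.range n, (ext' (n+1) y k - ext' (n+1) y (k+1))^2 :=
    Finset.sum_nonneg fun k _ => sq_nonneg _
  nlinarith [sq_nonneg (ext' (n+1) y n)]

set_option maxHeartbeats 1000000 in
lemma resid (d : ℕ) (hd : 5 ≤ d) (lam τ r : ℝ)
    (hroot : 1 - (4 + lam) * r + (6 + 2 * lam + τ) * r ^ 2 - (4 + lam) * r ^ 3 + r ^ 4 = 0)
    (A : Matrix (Fin d) (Fin d) ℝ)
    (hA : ∀ i j : Fin d, A i j =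
      if (i : ℕ) = (j : ℕ) then (if (i : ℕ) = 0 then 1 else 2)
      else if (i : ℕ) + 1 = (j : ℕ) ∨ (j : ℕ) + 1 = (i : ℕ) then -1 else 0)
    (btilde : Fin d → ℝ)
    (hb : ∀ i : Fin d, btilde i =
      if (i : ℕ) = 0 then (2 + lam + τ) * r - (3 + lam) * r ^ 2 + r ^ 3
      else if (i : ℕ) = 1 then r - 1 else 0)
    (xhat : Fin d → ℝ) (hxhat : ∀ i : Fin d, xhat i = r ^ ((i : ℕ) + 1)) (i : Fin d) :
    (A * A + lam • A + τ • (1 : Matrix (Fin d) (Fin d) ℝ)).mulVec xhat i - btilde i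
      = (if (i : ℕ) = d - 2 then -r ^ (d+1) else 0)
        + (if (i : ℕ) = d - 1 then -(r ^ d) + (4 + lam) * r ^ (d+1) - r ^ (d+2) else 0) := by
  obtain ⟨q, rfl⟩ : ∃ q, d = q + 5 := ⟨d - 5, by omega⟩
  have hX : ∀ n, ext' (q + 5) xhat n = if n < (q + 5) then r ^ (n + 1) else 0 := by
    intro n
    by_cases h : n < (q + 5)
    · rw [ext'_lt (q + 5) xhat n h, if_pos h, hxhat]
    · rw [ext'_ge (q + 5) xhat n h, if_neg h]
  have hv : ∀ n, ext' (q + 5) (A.mulVec xhat) n = if n < (q + 5) then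
      ((if n = 0 then 1 else 2) * r ^ (n+1) - (if n + 1 < (q + 5) then r ^ (n+1+1) else 0)
        - (if n = 0 then 0 else r ^ n)) else 0 := by
    intro n
    by_cases h : n < (q + 5)
    · rw [ext'_lt (q + 5) _ n h, if_pos h, tri_mulVec (q + 5) A hA xhat ⟨n, h⟩]
      show (if n = 0 then 1 else 2) * ext' (q + 5) xhat n - ext' (q + 5) xhat (n+1)
        - (if n = 0 then 0 else ext' (q + 5) xhat (n-1)) = _
      rw [hX n, hX (n+1), if_pos h]
      by_cases h0 : n = 0
      · simp only [if_pos h0]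
      · simp only [if_neg h0]
        rw [hX (n-1), if_pos (show n - 1 < (q + 5) by omega),
          show n - 1 + 1 = n from by omega]
    · rw [ext'_ge (q + 5) _ n h, if_neg h]
  have hvi : A.mulVec xhat i = ext' (q + 5) (A.mulVec xhat) (i : ℕ) := (ext'_lt (q + 5) _ _ i.2).symm
  have hstep : (A * A + lam • A + τ • (1 : Matrix (Fin (q + 5)) (Fin (q + 5)) ℝ)).mulVec xhat i
      = (if (i : ℕ) = 0 then 1 else 2) * ext' (q + 5) (A.mulVec xhat) (i : ℕ)
        - ext' (q + 5) (A.mulVec xhat) ((i : ℕ) + 1)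
        - (if (i : ℕ) = 0 then 0 else ext' (q + 5) (A.mulVec xhat) ((i : ℕ) - 1))
        + lam * ext' (q + 5) (A.mulVec xhat) (i : ℕ) + τ * r ^ ((i : ℕ) + 1) := by
    rw [Matrix.add_mulVec, Matrix.add_mulVec, Matrix.smul_mulVec, Matrix.smul_mulVec,
      Matrix.one_mulVec, ← Matrix.mulVec_mulVec]
    simp only [Pi.add_apply, Pi.smul_apply, smul_eq_mul]
    rw [tri_mulVec (q + 5) A hA (A.mulVec xhat) i, hvi, hxhat i]
  rw [hstep, hb i]
  simp only [hv]
  have hid : (i : ℕ) < q + 5 := i.2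
  by_cases h0 : (i : ℕ) = 0
  · rw [h0]
    split_ifs <;> first | (exfalso; first | omega | exact ‹False›) | ring1
  by_cases h1 : (i : ℕ) = 1
  · rw [h1]
    split_ifs <;> first | (exfalso; first | omega | exact ‹False›) | linear_combination hroot
  by_cases hd2 : (i : ℕ) = q + 3
  · rw [hd2]
    simp only [show q + 3 - 1 = q + 2 from rfl]
    split_ifs <;> first | (exfalso; first | omega | exact ‹False›) | linear_combination r ^ (q + 2) * hroot
  by_cases hd1 : (i : ℕ) = q + 4
  · rw [hd1]
    simp only [show q + 4 - 1 = q + 3 from rfl]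
    split_ifs <;> first | (exfalso; first | omega | exact ‹False›) | linear_combination r ^ (q + 3) * hroot
  · obtain ⟨m, hm⟩ : ∃ m, (i : ℕ) = m + 2 := ⟨(i : ℕ) - 2, by omega⟩
    have hmq : m ≤ q := by omega
    rw [hm]
    simp only [show m + 2 - 1 = m + 1 from rfl]
    split_ifs <;> first | (exfalso; first | omega | exact ‹False›) | linear_combination r ^ (m + 1) * hroot

set_option maxHeartbeats 1000000 in
/-- Lemma: approximation of the minimizer `x*` by the geometric
vector `x̂` in the strongly-convex–strongly-convex lower-bound construction.
Indices are 0-based, so the paper's `x̂_i = r^i` (1-based) reads `xhat i = r^(i+1)`,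
and `b̃_1, b̃_2` are the coordinates of index `0, 1`. -/
theorem xstar_xhat_close (d : ℕ) (hd : 5 ≤ d) (lam τ r : ℝ)
    (hlam : 0 < lam) (hτ : 0 < τ) (hr0 : 0 < r) (hr1 : r < 1)
    (hroot : 1 - (4 + lam) * r + (6 + 2 * lam + τ) * r ^ 2 - (4 + lam) * r ^ 3 + r ^ 4 = 0)
    (A : Matrix (Fin d) (Fin d) ℝ)
    (hA : ∀ i j : Fin d, A i j =
      if (i : ℕ) = (j : ℕ) then (if (i : ℕ) = 0 then 1 else 2)
      else if (i : ℕ) + 1 = (j : ℕ) ∨ (j : ℕ) + 1 = (i : ℕ) then -1 else 0)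
    (btilde : Fin d → ℝ)
    (hb : ∀ i : Fin d, btilde i =
      if (i : ℕ) = 0 then (2 + lam + τ) * r - (3 + lam) * r ^ 2 + r ^ 3
      else if (i : ℕ) = 1 then r - 1 else 0)
    (xstar : Fin d → ℝ)
    (hxstar : (A * A + lam • A + τ • (1 : Matrix (Fin d) (Fin d) ℝ)).mulVec xstar = btilde)
    (xhat : Fin d → ℝ) (hxhat : ∀ i : Fin d, xhat i = r ^ ((i : ℕ) + 1)) :
    Real.sqrt (∑ i, (xhat i - xstar i) ^ 2) ≤ ((7 + lam) / τ) * r ^ d := by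
  set M : Matrix (Fin d) (Fin d) ℝ := A * A + lam • A + τ • (1 : Matrix (Fin d) (Fin d) ℝ) with hM
  set y : Fin d → ℝ := xhat - xstar with hy
  have hyi : ∀ i : Fin d, y i = xhat i - xstar i := fun i => rfl
  set c1 : ℝ := -r ^ (d+1) with hc1
  set c2 : ℝ := -(r ^ d) + (4 + lam) * r ^ (d+1) - r ^ (d+2) with hc2
  have hMy : ∀ i : Fin d, M.mulVec y i
      = (if (i : ℕ) = d - 2 then c1 else 0) + (if (i : ℕ) = d - 1 then c2 else 0) := by
    intro i
    have : M.mulVec y = M.mulVec xhat - M.mulVec xstar := by rw [hy, Matrix.mulVec_sub]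
    rw [this, hxstar, Pi.sub_apply]
    exact resid d hd lam τ r hroot A hA btilde hb xhat hxhat i
  set S : ℝ := ∑ i, (xhat i - xstar i) ^ 2 with hS
  have hS0 : 0 ≤ S := Finset.sum_nonneg fun i _ => sq_nonneg _
  set t : ℝ := Real.sqrt S with ht
  have ht0 : 0 ≤ t := Real.sqrt_nonneg S
  have htS : t ^ 2 = S := Real.sq_sqrt hS0
  -- lower bound: τ * S ≤ y ⬝ᵥ M.mulVec y
  have hAA : 0 ≤ y ⬝ᵥ (A * A).mulVec y := by
    have h1 : y ⬝ᵥ (A * A).mulVec y = (A.mulVec y) ⬝ᵥ (A.mulVec y) := by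
      rw [← Matrix.mulVec_mulVec, Matrix.dotProduct_mulVec]
      congr 1
      rw [← Matrix.mulVec_transpose, tri_symm d A hA]
    rw [h1]
    exact Finset.sum_nonneg fun i _ => mul_self_nonneg _
  have hApsd : 0 ≤ y ⬝ᵥ A.mulVec y := tri_psd d A hA y
  have hyy : y ⬝ᵥ y = S := by
    rw [hS]
    refine Finset.sum_congr rfl fun i _ => ?_
    rw [hyi i]; ring
  have hlower : τ * S ≤ y ⬝ᵥ M.mulVec y := by
    have hexp : y ⬝ᵥ M.mulVec y
        = y ⬝ᵥ (A * A).mulVec y + lam * (y ⬝ᵥ A.mulVec y) + τ * (y ⬝ᵥ y) := by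
      rw [hM, Matrix.add_mulVec, Matrix.add_mulVec, dotProduct_add,
        dotProduct_add, Matrix.smul_mulVec, Matrix.smul_mulVec,
        Matrix.one_mulVec, dotProduct_smul, dotProduct_smul,
        smul_eq_mul, smul_eq_mul]
    rw [hexp, hyy]
    nlinarith [mul_nonneg hlam.le hApsd]
  -- upper bound: y ⬝ᵥ M.mulVec y ≤ t * ((7+lam) * r^d)
  have hd2 : d - 2 < d := by omega
  have hd1 : d - 1 < d := by omega
  have hdot : y ⬝ᵥ M.mulVec y = y ⟨d-2, hd2⟩ * c1 + y ⟨d-1, hd1⟩ * c2 := by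
    have : y ⬝ᵥ M.mulVec y = ∑ i, (y i * (if (i : ℕ) = d - 2 then c1 else 0)
        + y i * (if (i : ℕ) = d - 1 then c2 else 0)) := by
      simp only [dotProduct]
      refine Finset.sum_congr rfl fun i _ => ?_
      rw [hMy i]; ring
    rw [this, Finset.sum_add_distrib, sum_fin_ite' d (d-2) hd2 y c1,
      sum_fin_ite' d (d-1) hd1 y c2]
  have hyb : ∀ j : Fin d, |y j| ≤ t := by
    intro j
    rw [← Real.sqrt_sq_eq_abs, ht]
    apply Real.sqrt_le_sqrt
    rw [hS]
    have := Finset.single_le_sum (f := fun i : Fin d => (xhat i - xstar i)^2)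
      (fun i _ => sq_nonneg _) (Finset.mem_univ j)
    calc y j ^ 2 = (xhat j - xstar j)^2 := by rw [hyi j]
      _ ≤ _ := this
  have hrd : 0 < r ^ d := pow_pos hr0 d
  have hrd1 : 0 < r ^ (d+1) := pow_pos hr0 (d+1)
  have hrd2 : 0 < r ^ (d+2) := pow_pos hr0 (d+2)
  have hr1d : r ^ (d+1) ≤ r ^ d := by
    calc r ^ (d+1) = r ^ d * r := by ring
      _ ≤ r ^ d * 1 := by nlinarith
      _ = r ^ d := by ring
  have hr2d : r ^ (d+2) ≤ r ^ d := by
    have h1 : r ^ (d+2) = r ^ (d+1) * r := by ring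
    have h2 : r ^ (d+1) * r ≤ r ^ (d+1) * 1 := by nlinarith [hrd1]
    nlinarith [hr1d]
  have hc1abs : |c1| ≤ r ^ d := by
    rw [hc1, abs_neg, abs_of_pos hrd1]; exact hr1d
  have hc2abs : |c2| ≤ (6 + lam) * r ^ d := by
    rw [hc2]
    rw [abs_le]
    constructor
    · nlinarith
    · nlinarith
  have hupper : y ⬝ᵥ M.mulVec y ≤ t * ((7 + lam) * r ^ d) := by
    rw [hdot]
    have b1 : y ⟨d-2, hd2⟩ * c1 ≤ t * |c1| := by
      calc y ⟨d-2, hd2⟩ * c1 ≤ |y ⟨d-2, hd2⟩ * c1| := le_abs_self _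
        _ = |y ⟨d-2, hd2⟩| * |c1| := abs_mul _ _
        _ ≤ t * |c1| := mul_le_mul_of_nonneg_right (hyb _) (abs_nonneg _)
    have b2 : y ⟨d-1, hd1⟩ * c2 ≤ t * |c2| := by
      calc y ⟨d-1, hd1⟩ * c2 ≤ |y ⟨d-1, hd1⟩ * c2| := le_abs_self _
        _ = |y ⟨d-1, hd1⟩| * |c2| := abs_mul _ _
        _ ≤ t * |c2| := mul_le_mul_of_nonneg_right (hyb _) (abs_nonneg _)
    have : t * |c1| + t * |c2| ≤ t * ((7 + lam) * r ^ d) := by nlinarith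
    linarith
  -- conclude
  have hkey : τ * t ^ 2 ≤ t * ((7 + lam) * r ^ d) := by
    rw [htS]; linarith
  rcases eq_or_lt_of_le ht0 with h | h
  · rw [← h]
    positivity
  · rw [div_mul_eq_mul_div, le_div_iff₀ hτ]
    nlinarith [hkey, h]
end

section
/- Let d ≥ 3 and let C be the d×d real matrix with C_{i,i} = 2 for 1 ≤ i ≤ d−1, C_{d,d} = 1, C_{i,i+1} = C_{i+1,i} = −1 for 1 ≤ i ≤ d−1, and all other entries 0. Let L_x, L_y, L̃_{xy}, μ_y, β, B be positive reals. Define b̃ ∈ ℝ^d by b̃_1 = (B/√d)·( (5/4)L_xβ² + L_xβμ_y + (1/4)L̃²_{xy}L_y + (1/4)L_xμ_y² ), b̃_2 = −(B/√d)·( L_xβ² + (1/2)L_xβμ_y ), b̃_3 = (B/√d)·(L_xβ²/4), and b̃_t = 0 for 4 ≤ t ≤ d. Then the vector x* = (B/√d)·(1, 1, …, 1) ∈ ℝ^d satisfies ( (L_xβ²/4)·C³ + (L_xβμ_y/2)·C² + ((L_yL̃²_{xy} + L_xμ_y²)/4)·C ) x* = b̃; in particular ‖x*‖ = B. -/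
lemma sum_single {d : ℕ} (n : ℕ) (f : Fin d → ℝ) :
    (∑ j : Fin d, if (j : ℕ) = n then f j else 0) = if h : n < d then f ⟨n, h⟩ else 0 := by
  split_ifs with h
  · rw [Finset.sum_eq_single (⟨n, h⟩ : Fin d)]
    · simp
    · intro j _ hj
      rw [if_neg]
      exact fun hc => hj (Fin.ext hc)
    · simp
  · exact Finset.sum_eq_zero fun j _ => if_neg (by omega)

lemma mulVec_eval {d : ℕ} (C : Matrix (Fin d) (Fin d) ℝ)
    (hC : ∀ i j : Fin d, C i j =
      if (i : ℕ) = (j : ℕ) then (if (i : ℕ) + 1 = d then 1 else 2)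
      else if (i : ℕ) + 1 = (j : ℕ) ∨ (j : ℕ) + 1 = (i : ℕ) then -1 else 0)
    (u : Fin d → ℝ) (i : Fin d) :
    C.mulVec u i = (if (i : ℕ) + 1 = d then 1 else 2) * u i
      - (if h : (i : ℕ) + 1 < d then u ⟨(i : ℕ) + 1, h⟩ else 0)
      - (if h : 0 < (i : ℕ) then u ⟨(i : ℕ) - 1, by omega⟩ else 0) := by
  have key : ∀ j : Fin d, C i j * u j =
      (if (j : ℕ) = (i : ℕ) then (if (i : ℕ) + 1 = d then 1 else 2) * u j else 0)
      + (if (j : ℕ) = (i : ℕ) + 1 then -u j else 0)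
      + (if (j : ℕ) + 1 = (i : ℕ) then -u j else 0) := by
    intro j
    rw [hC]
    split_ifs <;> (first | (exfalso; omega) | contradiction | ring)
  simp only [Matrix.mulVec, dotProduct]
  rw [Finset.sum_congr rfl fun j _ => key j, Finset.sum_add_distrib, Finset.sum_add_distrib,
    sum_single, sum_single]
  have h3 : (∑ j : Fin d, if (j : ℕ) + 1 = (i : ℕ) then -u j else 0)
      = if h : 0 < (i : ℕ) then -u ⟨(i : ℕ) - 1, by omega⟩ else 0 := by
    by_cases hi : 0 < (i : ℕ)
    · rw [dif_pos hi]
      have : ∀ j : Fin d, ((j : ℕ) + 1 = (i : ℕ)) = ((j : ℕ) = (i : ℕ) - 1) := by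
        intro j; simp only [eq_iff_iff]; omega
      simp only [this]
      rw [sum_single, dif_pos (by omega)]
    · rw [dif_neg hi, Finset.sum_eq_zero]
      intro j _; rw [if_neg (by omega)]
  rw [h3]
  have hi : (i : ℕ) < d := i.isLt
  rw [dif_pos hi]
  have : (⟨(i : ℕ), hi⟩ : Fin d) = i := rfl
  rw [this]
  split_ifs with h1 h2 h2 <;> ring

/-- Step 2 of the convex–strongly-convex lower bound: the all-ones
vector scaled by `B/√d` solves the optimality equation.  Indices are 0-based, so the
paper's `b̃_1, b̃_2, b̃_3` are the coordinates of index `0, 1, 2`. -/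
theorem convex_lower_bound_minimizer (d : ℕ) (hd : 3 ≤ d)
    (Lx Ly Ltxy μy β B : ℝ)
    (hLx : 0 < Lx) (hLy : 0 < Ly) (hLtxy : 0 < Ltxy) (hμy : 0 < μy) (hβ : 0 < β)
    (hB : 0 < B)
    (C : Matrix (Fin d) (Fin d) ℝ)
    (hC : ∀ i j : Fin d, C i j =
      if (i : ℕ) = (j : ℕ) then (if (i : ℕ) + 1 = d then 1 else 2)
      else if (i : ℕ) + 1 = (j : ℕ) ∨ (j : ℕ) + 1 = (i : ℕ) then -1 else 0)
    (btilde : Fin d → ℝ)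
    (hb : ∀ i : Fin d, btilde i =
      if (i : ℕ) = 0 then
        (B / Real.sqrt d) * ((5 / 4) * Lx * β ^ 2 + Lx * β * μy
          + (1 / 4) * Ltxy ^ 2 * Ly + (1 / 4) * Lx * μy ^ 2)
      else if (i : ℕ) = 1 then -((B / Real.sqrt d) * (Lx * β ^ 2 + (1 / 2) * Lx * β * μy))
      else if (i : ℕ) = 2 then (B / Real.sqrt d) * (Lx * β ^ 2 / 4)
      else 0)
    (xstar : Fin d → ℝ) (hx : ∀ i, xstar i = B / Real.sqrt d) :
    ((Lx * β ^ 2 / 4) • (C * C * C) + (Lx * β * μy / 2) • (C * C)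
        + ((Ly * Ltxy ^ 2 + Lx * μy ^ 2) / 4) • C).mulVec xstar = btilde
      ∧ Real.sqrt (∑ i, xstar i ^ 2) = B := by
  set s := B / Real.sqrt d with hs
  have h1 : C.mulVec xstar = fun i : Fin d => if (i : ℕ) = 0 then s else 0 := by
    funext i
    rw [mulVec_eval C hC]
    simp only [hx]
    split_ifs <;> (first | (exfalso; omega) | contradiction | ring)
  have h2 : C.mulVec (fun i : Fin d => if (i : ℕ) = 0 then s else 0)
      = fun i : Fin d => if (i : ℕ) = 0 then 2 * s else if (i : ℕ) = 1 then -s else 0 := by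
    funext i
    rw [mulVec_eval C hC]
    simp only [Fin.val_mk]
    split_ifs <;> (first | (exfalso; omega) | contradiction | ring)
  have h3 : C.mulVec (fun i : Fin d => if (i : ℕ) = 0 then 2 * s else if (i : ℕ) = 1 then -s else 0)
      = fun i : Fin d => if (i : ℕ) = 0 then 5 * s else if (i : ℕ) = 1 then -(4 * s)
          else if (i : ℕ) = 2 then s else 0 := by
    funext i
    rw [mulVec_eval C hC]
    simp only [Fin.val_mk]
    split_ifs <;> (first | (exfalso; omega) | contradiction | ring)
  constructor
  · funext i
    rw [Matrix.add_mulVec, Matrix.add_mulVec, Matrix.smul_mulVec,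
      Matrix.smul_mulVec, Matrix.smul_mulVec,
      ← Matrix.mulVec_mulVec, ← Matrix.mulVec_mulVec, ← Matrix.mulVec_mulVec,
      h1, h2, h3, hb]
    simp only [Pi.add_apply, Pi.smul_apply, smul_eq_mul]
    split_ifs <;> (first | (exfalso; omega) | contradiction | ring)
  · have hd0 : (0 : ℝ) < (d : ℝ) := by positivity
    have hsum : (∑ i, xstar i ^ 2) = B ^ 2 := by
      simp only [hx, hs]
      rw [Finset.sum_const, Finset.card_univ, Fintype.card_fin, nsmul_eq_mul,
        div_pow, Real.sq_sqrt (by positivity : (0:ℝ) ≤ (d:ℝ)),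
        mul_div_cancel₀ _ (ne_of_gt hd0)]
    rw [hsum, Real.sqrt_sq hB.le]
end

section
/- Let l : ℝ^d → ℝ be twice continuously differentiable with ‖∇²l(w)‖ ≤ L for all w (equivalently, ∇l is L-Lipschitz), let α ≥ 0 and N ≥ 1. For w ∈ ℝ^d let w̃_0 = w and w̃_{j+1} = w̃_j − α∇l(w̃_j) be the gradient-descent path, and define the meta-gradient ∇L(w) := (I − α∇²l(w̃_0))(I − α∇²l(w̃_1))⋯(I − α∇²l(w̃_{N−1}))∇l(w̃_N) (matrix product with the j = 0 factor leftmost). Then ‖∇l(w) − ∇L(w)‖ ≤ ((1 + αL)^{2N} − 1)·‖∇l(w)‖. -/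
/-!
Put `c = αL` and `a = (1 + c)ᴺ - 1`. Every factor `I - α∇²l(w̃ⱼ)` lies within `c` of `I`, so their
product `P` lies within `a` of `I`; and since each descent step changes the gradient by at most
`c` times its current size, `‖∇l(w) - ∇l(w̃_N)‖ ≤ a‖∇l(w)‖`. Splitting
`∇l(w) - P∇l(w̃_N) = (∇l(w) - ∇l(w̃_N)) + (I - P)∇l(w̃_N)` gives the bound `(1 + a)² - 1`.
-/

open scoped NNReal

/- Expanding `1 - x * p` in powers of `1 - x` and `1 - p` avoids any bound on `‖1‖`. -/
theorem List.norm_one_sub_prod_le {R : Type*} [SeminormedRing R] {l : List R} {c : ℝ}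
    (h : ∀ x ∈ l, ‖1 - x‖ ≤ c) : ‖1 - l.prod‖ ≤ (1 + c) ^ l.length - 1 := by
  induction l with
  | nil => simp
  | cons x l ih =>
    have hx : ‖1 - x‖ ≤ c := h x List.mem_cons_self
    have hl : ‖1 - l.prod‖ ≤ (1 + c) ^ l.length - 1 :=
      ih fun y hy => h y (List.mem_cons_of_mem x hy)
    have hexpand : 1 - (x :: l).prod = (1 - x) + (1 - l.prod) - (1 - x) * (1 - l.prod) := by
      rw [List.prod_cons]; noncomm_ring
    calc ‖1 - (x :: l).prod‖
        ≤ ‖1 - x‖ + ‖1 - l.prod‖ + ‖1 - x‖ * ‖1 - l.prod‖ := by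
          rw [hexpand]
          exact (norm_sub_le _ _).trans (add_le_add (norm_add_le _ _) (norm_mul_le _ _))
      _ = (1 + ‖1 - x‖) * (1 + ‖1 - l.prod‖) - 1 := by ring
      _ ≤ (1 + c) * (1 + ((1 + c) ^ l.length - 1)) - 1 := by
          gcongr; linarith [norm_nonneg (1 - x)]
      _ = (1 + c) ^ (x :: l).length - 1 := by rw [List.length_cons]; ring

theorem ContinuousLinearMap.norm_sub_apply_le {𝕜 E : Type*} [NontriviallyNormedField 𝕜]
    [SeminormedAddCommGroup E] [NormedSpace 𝕜 E] {T : E →L[𝕜] E} {u v : E} {a : ℝ}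
    (hT : ‖1 - T‖ ≤ a) (huv : ‖u - v‖ ≤ a * ‖u‖) : ‖u - T v‖ ≤ ((1 + a) ^ 2 - 1) * ‖u‖ := by
  have ha : 0 ≤ a := (norm_nonneg _).trans hT
  have hv : ‖v‖ ≤ (1 + a) * ‖u‖ := by
    linarith [norm_le_norm_add_norm_sub' v u, norm_sub_rev u v]
  calc ‖u - T v‖ = ‖(u - v) + (1 - T) v‖ := by simp
    _ ≤ a * ‖u‖ + a * ((1 + a) * ‖u‖) := (norm_add_le _ _).trans <|
        add_le_add huv (((1 - T).le_opNorm v).trans (mul_le_mul hT hv (norm_nonneg v) ha))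
    _ = ((1 + a) ^ 2 - 1) * ‖u‖ := by ring

/- The growth bound `‖G xⱼ‖ ≤ (1 + αK)ʲ‖G x₀‖` needed for the step is read off the bound at `j`. -/
theorem LipschitzWith.norm_sub_apply_descent_le {E : Type*} [SeminormedAddCommGroup E]
    [NormedSpace ℝ E] {G : E → E} {K : ℝ≥0} (hG : LipschitzWith K G) {α : ℝ} (hα : 0 ≤ α)
    {x : ℕ → E} (hx : ∀ j, x (j + 1) = x j - α • G (x j)) (j : ℕ) :
    ‖G (x 0) - G (x j)‖ ≤ ((1 + α * K) ^ j - 1) * ‖G (x 0)‖ := by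
  induction j with
  | zero => simp
  | succ j ih =>
    have hgrowth : ‖G (x j)‖ ≤ (1 + α * K) ^ j * ‖G (x 0)‖ := by
      linarith [norm_le_norm_add_norm_sub' (G (x j)) (G (x 0)), norm_sub_rev (G (x j)) (G (x 0))]
    have hstep : ‖G (x j) - G (x (j + 1))‖ ≤ α * K * ‖G (x j)‖ :=
      calc ‖G (x j) - G (x (j + 1))‖ ≤ K * ‖x j - x (j + 1)‖ := hG.norm_sub_le _ _
        _ = α * K * ‖G (x j)‖ := by
          rw [hx, sub_sub_cancel, norm_smul, Real.norm_of_nonneg hα]; ring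
    calc ‖G (x 0) - G (x (j + 1))‖ ≤ ‖G (x 0) - G (x j)‖ + ‖G (x j) - G (x (j + 1))‖ :=
          norm_sub_le_norm_sub_add_norm_sub _ _ _
      _ ≤ ((1 + α * K) ^ j - 1) * ‖G (x 0)‖ + α * K * ((1 + α * K) ^ j * ‖G (x 0)‖) :=
          add_le_add ih (hstep.trans (mul_le_mul_of_nonneg_left hgrowth (by positivity)))
      _ = ((1 + α * K) ^ (j + 1) - 1) * ‖G (x 0)‖ := by ring

theorem ContDiff.differentiable_gradient {F : Type*} [NormedAddCommGroup F]
    [InnerProductSpace ℝ F] [CompleteSpace F] {f : F → ℝ} (hf : ContDiff ℝ 2 f) :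
    Differentiable ℝ (gradient f) :=
  (InnerProductSpace.toDual ℝ F).symm.differentiable.comp
    ((hf.fderiv_right (by norm_num)).differentiable one_ne_zero)

theorem maml_meta_gradient_vs_gradient_general (d : ℕ)
    (l : EuclideanSpace ℝ (Fin d) → ℝ) (L α : ℝ) (N : ℕ)
    (hl : ContDiff ℝ 2 l)
    (hL : ∀ w, ‖fderiv ℝ (gradient l) w‖ ≤ L)
    (hα : 0 ≤ α)
    (w : EuclideanSpace ℝ (Fin d)) (wp : ℕ → EuclideanSpace ℝ (Fin d))
    (hwp0 : wp 0 = w)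
    (hwpS : ∀ j, wp (j + 1) = wp j - α • gradient l (wp j)) :
    ‖gradient l w -
        (((List.range N).map (fun j =>
            (1 : EuclideanSpace ℝ (Fin d) →L[ℝ] EuclideanSpace ℝ (Fin d))
              - α • fderiv ℝ (gradient l) (wp j))).prod)
          (gradient l (wp N))‖
      ≤ ((1 + α * L) ^ (2 * N) - 1) * ‖gradient l w‖ := by
  subst hwp0
  have hL0 : 0 ≤ L := (norm_nonneg _).trans (hL (wp 0))
  have hlip : LipschitzWith L.toNNReal (gradient l) :=
    lipschitzWith_of_nnnorm_fderiv_le hl.differentiable_gradient fun x => by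
      rw [← NNReal.coe_le_coe, coe_nnnorm, Real.coe_toNNReal _ hL0]; exact hL x
  have hfactor : ∀ T ∈ (List.range N).map (fun j =>
      (1 : EuclideanSpace ℝ (Fin d) →L[ℝ] EuclideanSpace ℝ (Fin d))
        - α • fderiv ℝ (gradient l) (wp j)), ‖1 - T‖ ≤ α * L := by
    simp only [List.mem_map]
    rintro _ ⟨j, -, rfl⟩
    rw [sub_sub_cancel, norm_smul, Real.norm_of_nonneg hα]
    exact mul_le_mul_of_nonneg_left (hL _) hα
  have hprod := List.norm_one_sub_prod_le hfactor
  have hdrift := hlip.norm_sub_apply_descent_le hα hwpS N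
  rw [List.length_map, List.length_range] at hprod
  rw [Real.coe_toNNReal _ hL0] at hdrift
  have hexp : (1 + α * L) ^ (2 * N) - 1 = (1 + ((1 + α * L) ^ N - 1)) ^ 2 - 1 := by ring
  rw [hexp]
  exact ContinuousLinearMap.norm_sub_apply_le hprod hdrift

/-- Lemma D.4: distance between the task gradient and the MAML
meta-gradient.  `∇²l` is realized as `fderiv ℝ (gradient l)` and the product of the
matrices `I − α∇²l(w̃ⱼ)` is ordered with the `j = 0` factor leftmost. -/
theorem maml_meta_gradient_vs_gradient (d : ℕ)
    (l : EuclideanSpace ℝ (Fin d) → ℝ) (L α : ℝ) (N : ℕ)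
    (hl : ContDiff ℝ 2 l)
    (hL : ∀ w, ‖fderiv ℝ (gradient l) w‖ ≤ L)
    (hα : 0 ≤ α) (hN : 1 ≤ N)
    (w : EuclideanSpace ℝ (Fin d)) (wp : ℕ → EuclideanSpace ℝ (Fin d))
    (hwp0 : wp 0 = w)
    (hwpS : ∀ j, wp (j + 1) = wp j - α • gradient l (wp j)) :
    ‖gradient l w -
        (((List.range N).map (fun j =>
            (1 : EuclideanSpace ℝ (Fin d) →L[ℝ] EuclideanSpace ℝ (Fin d))
              - α • fderiv ℝ (gradient l) (wp j))).prod)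
          (gradient l (wp N))‖
      ≤ ((1 + α * L) ^ (2 * N) - 1) * ‖gradient l w‖ :=
  maml_meta_gradient_vs_gradient_general d l L α N hl hL hα w wp hwp0 hwpS
end

section
/- Let l_S, l_T : ℝ^d → ℝ be twice continuously differentiable with L-Lipschitz gradients (equivalently, ‖∇²l_S(w)‖ ≤ L and ‖∇²l_T(w)‖ ≤ L for all w), let α ≥ 0 and N ≥ 1. For w ∈ ℝ^d let w̃_0 = w and w̃_{j+1} = w̃_j − α∇l_S(w̃_j) be the gradient-descent path on l_S, and define ∇L(w) := (I − α∇²l_S(w̃_0))(I − α∇²l_S(w̃_1))⋯(I − α∇²l_S(w̃_{N−1}))∇l_T(w̃_N) (matrix product with the j = 0 factor leftmost). Then ‖∇l_T(w) − ∇L(w)‖ ≤ ((1 + αL)^N − 1)·‖∇l_T(w)‖ + (1 + αL)^N·((1 + αL)^N − 1)·‖∇l_S(w)‖. -/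
/-!
Let `P` be the product of the factors `1 - α ∇²l_S(w̃_j)`, each within `αL` of the identity, and
split `∇l_T(w) - P ∇l_T(w̃_N) = (1 - P) ∇l_T(w) + P (∇l_T(w) - ∇l_T(w̃_N))`. Expanding
`1 - aP = (1 - a) + a (1 - P)` factor by factor gives `‖1 - P‖ ≤ (1 + αL)^N - 1`, hence
`‖P‖ ≤ (1 + αL)^N`. Along the descent path `‖∇l_S(w̃_j)‖` grows at most by the factor `1 + αL`
per step, so summing the step lengths gives `L ‖w - w̃_N‖ ≤ ((1 + αL)^N - 1) ‖∇l_S(w)‖`, which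
bounds the second term through the Lipschitz continuity of `∇l_T`.
-/

namespace ContinuousLinearMap

variable {𝕜 E : Type*} [NontriviallyNormedField 𝕜] [NormedAddCommGroup E] [NormedSpace 𝕜 E]

theorem norm_one_sub_list_prod_le {δ : ℝ} (l : List (E →L[𝕜] E))
    (hl : ∀ a ∈ l, ‖1 - a‖ ≤ δ) : ‖1 - l.prod‖ ≤ (1 + δ) ^ l.length - 1 := by
  induction l with
  | nil => simp
  | cons a l ih =>
    have ha : ‖1 - a‖ ≤ δ := hl a List.mem_cons_self
    have hP : ‖1 - l.prod‖ ≤ (1 + δ) ^ l.length - 1 :=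
      ih fun b hb => hl b (List.mem_cons_of_mem a hb)
    have ha' : ‖a‖ ≤ 1 + δ := calc
      ‖a‖ = ‖1 - (1 - a)‖ := by rw [sub_sub_cancel]
      _ ≤ ‖(1 : E →L[𝕜] E)‖ + ‖1 - a‖ := norm_sub_le _ _
      _ ≤ 1 + δ := add_le_add norm_id_le ha
    calc ‖1 - (a :: l).prod‖ = ‖(1 - a) + a * (1 - l.prod)‖ := by
          rw [List.prod_cons, mul_sub, mul_one, sub_add_sub_cancel]
      _ ≤ ‖1 - a‖ + ‖a‖ * ‖1 - l.prod‖ := norm_add_le_of_le le_rfl (norm_mul_le _ _)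
      _ ≤ δ + (1 + δ) * ((1 + δ) ^ l.length - 1) := by
          gcongr
          exact (norm_nonneg _).trans ha'
      _ = (1 + δ) ^ (a :: l).length - 1 := by rw [List.length_cons, pow_succ]; ring

theorem norm_list_prod_le_of_norm_one_sub_le {δ : ℝ} (l : List (E →L[𝕜] E))
    (hl : ∀ a ∈ l, ‖1 - a‖ ≤ δ) : ‖l.prod‖ ≤ (1 + δ) ^ l.length := calc
  ‖l.prod‖ = ‖1 - (1 - l.prod)‖ := by rw [sub_sub_cancel]
  _ ≤ ‖(1 : E →L[𝕜] E)‖ + ‖1 - l.prod‖ := norm_sub_le _ _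
  _ ≤ 1 + ((1 + δ) ^ l.length - 1) := add_le_add norm_id_le (norm_one_sub_list_prod_le l hl)
  _ = (1 + δ) ^ l.length := by ring

end ContinuousLinearMap

section GradientDescent

variable {F : Type*} [NormedAddCommGroup F] [NormedSpace ℝ F]
  {g : F → F} {L α : ℝ} {x : ℕ → F}

theorem norm_apply_gradientDescent_le (hL : 0 ≤ L) (hα : 0 ≤ α)
    (hg : ∀ a b, ‖g a - g b‖ ≤ L * ‖a - b‖) (hx : ∀ j, x (j + 1) = x j - α • g (x j)) (n : ℕ) :
    ‖g (x n)‖ ≤ (1 + α * L) ^ n * ‖g (x 0)‖ := by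
  induction n with
  | zero => simp
  | succ n ih =>
    calc ‖g (x (n + 1))‖ ≤ ‖g (x (n + 1)) - g (x n)‖ + ‖g (x n)‖ := norm_le_norm_sub_add _ _
      _ ≤ L * (α * ‖g (x n)‖) + ‖g (x n)‖ := by
          gcongr
          simpa [hx n, norm_smul, abs_of_nonneg hα] using hg (x (n + 1)) (x n)
      _ = (1 + α * L) * ‖g (x n)‖ := by ring
      _ ≤ (1 + α * L) * ((1 + α * L) ^ n * ‖g (x 0)‖) := by gcongr
      _ = (1 + α * L) ^ (n + 1) * ‖g (x 0)‖ := by ring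

theorem mul_norm_sub_gradientDescent_le (hL : 0 ≤ L) (hα : 0 ≤ α)
    (hg : ∀ a b, ‖g a - g b‖ ≤ L * ‖a - b‖) (hx : ∀ j, x (j + 1) = x j - α • g (x j)) (n : ℕ) :
    L * ‖x 0 - x n‖ ≤ ((1 + α * L) ^ n - 1) * ‖g (x 0)‖ := by
  induction n with
  | zero => simp
  | succ n ih =>
    have hstep : ‖x n - x (n + 1)‖ = α * ‖g (x n)‖ := by
      rw [hx n, sub_sub_cancel, norm_smul, Real.norm_of_nonneg hα]
    have hgrowth := norm_apply_gradientDescent_le hL hα hg hx n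
    calc L * ‖x 0 - x (n + 1)‖ ≤ L * ‖x 0 - x n‖ + L * ‖x n - x (n + 1)‖ := by
          rw [← mul_add]; gcongr; exact norm_sub_le_norm_sub_add_norm_sub _ _ _
      _ ≤ ((1 + α * L) ^ n - 1) * ‖g (x 0)‖ + L * (α * ((1 + α * L) ^ n * ‖g (x 0)‖)) := by
          rw [hstep]; gcongr
      _ = ((1 + α * L) ^ (n + 1) - 1) * ‖g (x 0)‖ := by ring

end GradientDescent

section Gradient

variable {F : Type*} [NormedAddCommGroup F] [InnerProductSpace ℝ F] [CompleteSpace F]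
  {f : F → ℝ}

theorem ContDiff.differentiable_gradient_s14 {n : WithTop ℕ∞} (hf : ContDiff ℝ n f) (hn : 2 ≤ n) :
    Differentiable ℝ (gradient f) := by
  have hfderiv : Differentiable ℝ (fderiv ℝ f) :=
    (hf.fderiv_right (m := 1) hn).differentiable one_ne_zero
  have hgrad : gradient f = (InnerProductSpace.toDual ℝ F).symm ∘ fderiv ℝ f := rfl
  rw [hgrad]
  exact (InnerProductSpace.toDual ℝ F).symm.toContinuousLinearEquiv.differentiable.comp hfderiv

theorem norm_gradient_sub_le {L : ℝ} (hf : ContDiff ℝ 2 f)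
    (hL : ∀ w, ‖fderiv ℝ (gradient f) w‖ ≤ L) (a b : F) :
    ‖gradient f a - gradient f b‖ ≤ L * ‖a - b‖ :=
  convex_univ.norm_image_sub_le_of_norm_fderiv_le
    (fun _ _ => (hf.differentiable_gradient_s14 le_rfl).differentiableAt)
    (fun x _ => hL x) (Set.mem_univ b) (Set.mem_univ a)

end Gradient

theorem finite_sum_maml_meta_gradient_vs_gradient_general (d : ℕ)
    (lS lT : EuclideanSpace ℝ (Fin d) → ℝ) (L α : ℝ) (N : ℕ)
    (hlS : ContDiff ℝ 2 lS) (hlT : ContDiff ℝ 2 lT)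
    (hLS : ∀ w, ‖fderiv ℝ (gradient lS) w‖ ≤ L)
    (hLT : ∀ w, ‖fderiv ℝ (gradient lT) w‖ ≤ L)
    (hα : 0 ≤ α)
    (w : EuclideanSpace ℝ (Fin d)) (wp : ℕ → EuclideanSpace ℝ (Fin d))
    (hwp0 : wp 0 = w)
    (hwpS : ∀ j, wp (j + 1) = wp j - α • gradient lS (wp j)) :
    ‖gradient lT w -
        (((List.range N).map (fun j =>
            (1 : EuclideanSpace ℝ (Fin d) →L[ℝ] EuclideanSpace ℝ (Fin d))
              - α • fderiv ℝ (gradient lS) (wp j))).prod)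
          (gradient lT (wp N))‖
      ≤ ((1 + α * L) ^ N - 1) * ‖gradient lT w‖
        + (1 + α * L) ^ N * ((1 + α * L) ^ N - 1) * ‖gradient lS w‖ := by
  subst hwp0
  set factors := (List.range N).map fun j =>
    (1 : EuclideanSpace ℝ (Fin d) →L[ℝ] EuclideanSpace ℝ (Fin d))
      - α • fderiv ℝ (gradient lS) (wp j)
  have hL : 0 ≤ L := (norm_nonneg _).trans (hLS (wp 0))
  have hfactors : ∀ a ∈ factors, ‖1 - a‖ ≤ α * L := by
    simp only [factors, List.mem_map, List.mem_range]
    rintro _ ⟨j, -, rfl⟩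
    rw [sub_sub_cancel, norm_smul, Real.norm_of_nonneg hα]
    exact mul_le_mul_of_nonneg_left (hLS _) hα
  have hlength : factors.length = N := by simp [factors]
  have hdrift : ‖gradient lT (wp 0) - gradient lT (wp N)‖
      ≤ ((1 + α * L) ^ N - 1) * ‖gradient lS (wp 0)‖ :=
    (norm_gradient_sub_le hlT hLT _ _).trans
      (mul_norm_sub_gradientDescent_le hL hα (norm_gradient_sub_le hlS hLS) hwpS N)
  have hsplit : gradient lT (wp 0) - factors.prod (gradient lT (wp N)) =
      (1 - factors.prod) (gradient lT (wp 0))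
        + factors.prod (gradient lT (wp 0) - gradient lT (wp N)) := by
    simp only [sub_apply, one_apply_eq_self, map_sub]
    abel
  rw [hsplit, mul_assoc]
  refine norm_add_le_of_le ?_ ?_ <;> refine (ContinuousLinearMap.le_opNorm _ _).trans ?_
  · gcongr
    simpa [hlength] using ContinuousLinearMap.norm_one_sub_list_prod_le factors hfactors
  · gcongr
    simpa [hlength] using
      ContinuousLinearMap.norm_list_prod_le_of_norm_one_sub_le factors hfactors

/-- Lemma D.9: distance between the test gradient and the
finite-sum MAML meta-gradient.  The inner loop runs gradient descent on `l_S` and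
the outer loss is `l_T`; `∇²l_S` is realized as `fderiv ℝ (gradient l_S)` and the
product is ordered with the `j = 0` factor leftmost. -/
theorem finite_sum_maml_meta_gradient_vs_gradient (d : ℕ)
    (lS lT : EuclideanSpace ℝ (Fin d) → ℝ) (L α : ℝ) (N : ℕ)
    (hlS : ContDiff ℝ 2 lS) (hlT : ContDiff ℝ 2 lT)
    (hLS : ∀ w, ‖fderiv ℝ (gradient lS) w‖ ≤ L)
    (hLT : ∀ w, ‖fderiv ℝ (gradient lT) w‖ ≤ L)
    (hα : 0 ≤ α) (hN : 1 ≤ N)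
    (w : EuclideanSpace ℝ (Fin d)) (wp : ℕ → EuclideanSpace ℝ (Fin d))
    (hwp0 : wp 0 = w)
    (hwpS : ∀ j, wp (j + 1) = wp j - α • gradient lS (wp j)) :
    ‖gradient lT w -
        (((List.range N).map (fun j =>
            (1 : EuclideanSpace ℝ (Fin d) →L[ℝ] EuclideanSpace ℝ (Fin d))
              - α • fderiv ℝ (gradient lS) (wp j))).prod)
          (gradient lT (wp N))‖
      ≤ ((1 + α * L) ^ N - 1) * ‖gradient lT w‖
        + (1 + α * L) ^ N * ((1 + α * L) ^ N - 1) * ‖gradient lS w‖ :=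
  finite_sum_maml_meta_gradient_vs_gradient_general d lS lT L α N hlS hlT hLS hLT hα w wp hwp0 hwpS
end

section
/- (Lipschitzness of the MAML meta-gradient.) Let (ι, 𝒜, P) be a probability space of tasks and let l : ι → (ℝ^d → ℝ) be a family of twice continuously differentiable functions such that, for every i ∈ ι, ∇l_i is L-Lipschitz (L > 0) and ∇²l_i is ρ-Lipschitz (in operator norm). Let α ≥ 0 and N ≥ 1. For each i and w ∈ ℝ^d let w̃_0^i(w) = w, w̃_{j+1}^i(w) = w̃_j^i(w) − α∇l_i(w̃_j^i(w)), and ∇L_i(w) := (I − α∇²l_i(w̃_0^i(w)))⋯(I − α∇²l_i(w̃_{N−1}^i(w)))∇l_i(w̃_N^i(w)) (product with the j = 0 factor leftmost). Assume that for every w the map i ↦ ∇L_i(w) is Bochner P-integrable and i ↦ ‖∇l_i(w)‖ is P-integrable, and set ∇𝓛(w) := ∫ ∇L_i(w) dP(i). Then for all w, u ∈ ℝ^d, ‖∇𝓛(w) − ∇𝓛(u)‖ ≤ ( (1+αL)^{2N} L + C_𝓛 · ∫ ‖∇l_i(w)‖ dP(i) )·‖w − u‖, where C_𝓛 = ( (1+αL)^{N−1}·αρ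 + (ρ/L)·(1+αL)^N·((1+αL)^{N−1} − 1) )·(1+αL)^N. -/
/-!
Each inner step `x ↦ x - α ∇l(x)` is `(1 + αL)`-Lipschitz and multiplies `‖∇l‖` by at most
`1 + αL`, so the descent paths from `w` and `u` stay `(1 + αL)^j ‖w - u‖` apart and
`‖∇l(w̃_j)‖ ≤ (1 + αL)^j ‖∇l(w)‖`. Every Jacobian factor `I - α∇²l` has norm at most
`1 + αL` (a gradient that is `L`-Lipschitz has Hessian of norm `≤ L`), and by the `ρ`-Lipschitz
Hessian the `j`-th factors along the two paths differ by at most `αρ (1 + αL)^j ‖w - u‖`;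
telescoping the product bounds the difference of the Jacobians `J_w, J_u`. Writing
`J_w g_w - J_u g_u = (J_w - J_u) g_w + J_u (g_w - g_u)` gives a per-task bound that is affine in
`‖∇l_i(w)‖` and integrates to the claim, since
`C = αρ (1 + αL)^(N-1) (∑_{j<N} (1 + αL)^j) (1 + αL)^N`.
-/

open MeasureTheory

section DescentPath

variable {E : Type*} [SeminormedAddCommGroup E] [NormedSpace ℝ E] {g : E → E} {K a : ℝ}

theorem norm_descent_step_sub_le (ha : 0 ≤ a) (hg : ∀ x y, ‖g x - g y‖ ≤ K * ‖x - y‖)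
    (x y : E) : ‖(x - a • g x) - (y - a • g y)‖ ≤ (1 + a * K) * ‖x - y‖ :=
  calc ‖(x - a • g x) - (y - a • g y)‖ = ‖(x - y) - a • (g x - g y)‖ := by
        rw [smul_sub]; abel_nf
    _ ≤ ‖x - y‖ + a * ‖g x - g y‖ := by
        grw [norm_sub_le, norm_smul, Real.norm_of_nonneg ha]
    _ ≤ ‖x - y‖ + a * (K * ‖x - y‖) := by gcongr; exact hg x y
    _ = (1 + a * K) * ‖x - y‖ := by ring

theorem norm_apply_descent_step_le (ha : 0 ≤ a) (hg : ∀ x y, ‖g x - g y‖ ≤ K * ‖x - y‖)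
    (x : E) : ‖g (x - a • g x)‖ ≤ (1 + a * K) * ‖g x‖ :=
  calc ‖g (x - a • g x)‖ ≤ ‖g x‖ + ‖g (x - a • g x) - g x‖ := norm_le_insert' _ _
    _ ≤ ‖g x‖ + K * ‖(x - a • g x) - x‖ := by gcongr; exact hg _ _
    _ = (1 + a * K) * ‖g x‖ := by
        rw [sub_sub_cancel_left, norm_neg, norm_smul, Real.norm_of_nonneg ha]; ring

variable {p q : ℕ → E}

theorem norm_descent_sub_le (ha : 0 ≤ a) (hK : 0 ≤ K)
    (hg : ∀ x y, ‖g x - g y‖ ≤ K * ‖x - y‖) (hp : ∀ j, p (j + 1) = p j - a • g (p j))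
    (hq : ∀ j, q (j + 1) = q j - a • g (q j)) (j : ℕ) :
    ‖p j - q j‖ ≤ (1 + a * K) ^ j * ‖p 0 - q 0‖ :=
  le_geom (u := fun j => ‖p j - q j‖) (by positivity) j fun k _ => by
    simp only [hp, hq]; exact norm_descent_step_sub_le ha hg _ _

theorem norm_apply_descent_le (ha : 0 ≤ a) (hK : 0 ≤ K)
    (hg : ∀ x y, ‖g x - g y‖ ≤ K * ‖x - y‖) (hp : ∀ j, p (j + 1) = p j - a • g (p j))
    (j : ℕ) : ‖g (p j)‖ ≤ (1 + a * K) ^ j * ‖g (p 0)‖ :=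
  le_geom (u := fun j => ‖g (p j)‖) (by positivity) j fun k _ => by
    simp only [hp]; exact norm_apply_descent_step_le ha hg _

end DescentPath

section OperatorProducts

variable {𝕜 E : Type*} [NontriviallyNormedField 𝕜] [SeminormedAddCommGroup E] [NormedSpace 𝕜 E]
  {f g : ℕ → E →L[𝕜] E} {M : ℝ}

theorem norm_prod_range_map_le (hf : ∀ j, ‖f j‖ ≤ M) (n : ℕ) :
    ‖((List.range n).map f).prod‖ ≤ M ^ n := by
  induction n with
  | zero => simpa [ContinuousLinearMap.one_def] using ContinuousLinearMap.norm_id_le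
  | succ n ih =>
    rw [List.prod_range_succ, pow_succ]
    exact (norm_mul_le _ _).trans
      (mul_le_mul ih (hf n) (norm_nonneg _) ((norm_nonneg _).trans ih))

theorem norm_prod_range_map_sub_le (hf : ∀ j, ‖f j‖ ≤ M) (hg : ∀ j, ‖g j‖ ≤ M) (n : ℕ) :
    ‖((List.range n).map f).prod - ((List.range n).map g).prod‖
      ≤ M ^ (n - 1) * ∑ j ∈ Finset.range n, ‖f j - g j‖ := by
  have hM : 0 ≤ M := (norm_nonneg _).trans (hf 0)
  induction n with
  | zero => simp
  | succ n ih =>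
    set Pf := ((List.range n).map f).prod
    set Pg := ((List.range n).map g).prod
    have hsplit : Pf * f n - Pg * g n = (Pf - Pg) * f n + Pg * (f n - g n) := by
      rw [sub_mul, mul_sub]; abel
    -- `M ^ (n - 1) * M = M ^ n` fails for `n = 0` (truncated subtraction), but the sum is empty.
    have hshift : M ^ (n - 1) * (∑ j ∈ Finset.range n, ‖f j - g j‖) * M
        = M ^ n * ∑ j ∈ Finset.range n, ‖f j - g j‖ := by
      rcases n with _ | n
      · simp
      · rw [Nat.add_sub_cancel, pow_succ]; ring
    have hPg : ‖Pg‖ ≤ M ^ n := norm_prod_range_map_le hg n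
    rw [List.prod_range_succ, List.prod_range_succ, hsplit, Nat.add_sub_cancel,
      Finset.sum_range_succ, mul_add, ← hshift]
    grw [norm_add_le, norm_mul_le, norm_mul_le, ih, hf n, hPg]

end OperatorProducts

section DescentJacobian

variable {E : Type*} [NormedAddCommGroup E] [NormedSpace ℝ E]

noncomputable def descentJacobian (g : E → E) (a : ℝ) (p : ℕ → E) (n : ℕ) : E →L[ℝ] E :=
  ((List.range n).map fun j => 1 - a • fderiv ℝ g (p j)).prod

variable {g : E → E} {a L ρ : ℝ} {p q : ℕ → E}

theorem norm_one_sub_smul_fderiv_le (ha : 0 ≤ a) (hL : 0 ≤ L)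
    (hgL : ∀ x y, ‖g x - g y‖ ≤ L * ‖x - y‖) (x : E) :
    ‖1 - a • fderiv ℝ g x‖ ≤ 1 + a * L := by
  have hDg : ‖fderiv ℝ g x‖ ≤ L :=
    norm_fderiv_le_of_lip' ℝ hL (Filter.Eventually.of_forall fun y => hgL y x)
  have hone : ‖(1 : E →L[ℝ] E)‖ ≤ 1 := ContinuousLinearMap.norm_id_le
  grw [norm_sub_le, norm_smul, Real.norm_of_nonneg ha, hone, hDg]

theorem norm_descentJacobian_le (ha : 0 ≤ a) (hL : 0 ≤ L)
    (hgL : ∀ x y, ‖g x - g y‖ ≤ L * ‖x - y‖) (p : ℕ → E) (n : ℕ) :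
    ‖descentJacobian g a p n‖ ≤ (1 + a * L) ^ n :=
  norm_prod_range_map_le (fun j => norm_one_sub_smul_fderiv_le ha hL hgL (p j)) n

theorem norm_descentJacobian_sub_le (ha : 0 ≤ a) (hL : 0 ≤ L) (hρ : 0 ≤ ρ)
    (hgL : ∀ x y, ‖g x - g y‖ ≤ L * ‖x - y‖)
    (hgρ : ∀ x y, ‖fderiv ℝ g x - fderiv ℝ g y‖ ≤ ρ * ‖x - y‖)
    (hp : ∀ j, p (j + 1) = p j - a • g (p j)) (hq : ∀ j, q (j + 1) = q j - a • g (q j))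
    (n : ℕ) :
    ‖descentJacobian g a p n - descentJacobian g a q n‖
      ≤ a * ρ * (1 + a * L) ^ (n - 1) * (∑ j ∈ Finset.range n, (1 + a * L) ^ j)
        * ‖p 0 - q 0‖ := by
  have hfactor : ∀ j, ‖(1 - a • fderiv ℝ g (p j)) - (1 - a • fderiv ℝ g (q j))‖
      ≤ a * ρ * ((1 + a * L) ^ j * ‖p 0 - q 0‖) := fun j =>
    calc _ = a * ‖fderiv ℝ g (q j) - fderiv ℝ g (p j)‖ := by
          rw [sub_sub_sub_cancel_left, ← smul_sub, norm_smul, Real.norm_of_nonneg ha]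
      _ ≤ a * (ρ * ‖p j - q j‖) := by rw [norm_sub_rev (p j)]; gcongr; exact hgρ _ _
      _ ≤ a * ρ * ((1 + a * L) ^ j * ‖p 0 - q 0‖) := by
          rw [← mul_assoc]; gcongr; exact norm_descent_sub_le ha hL hgL hp hq j
  calc _ ≤ (1 + a * L) ^ (n - 1) * ∑ j ∈ Finset.range n,
        ‖(1 - a • fderiv ℝ g (p j)) - (1 - a • fderiv ℝ g (q j))‖ :=
        norm_prod_range_map_sub_le (fun j => norm_one_sub_smul_fderiv_le ha hL hgL (p j))
          (fun j => norm_one_sub_smul_fderiv_le ha hL hgL (q j)) n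
    _ ≤ (1 + a * L) ^ (n - 1)
          * ∑ j ∈ Finset.range n, a * ρ * ((1 + a * L) ^ j * ‖p 0 - q 0‖) := by
        gcongr with j; exact hfactor j
    _ = _ := by
        rw [Finset.mul_sum, Finset.mul_sum, Finset.sum_mul]
        exact Finset.sum_congr rfl fun j _ => by ring

theorem norm_descentJacobian_apply_sub_le (ha : 0 ≤ a) (hL : 0 ≤ L) (hρ : 0 ≤ ρ)
    (hgL : ∀ x y, ‖g x - g y‖ ≤ L * ‖x - y‖)
    (hgρ : ∀ x y, ‖fderiv ℝ g x - fderiv ℝ g y‖ ≤ ρ * ‖x - y‖)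
    (hp : ∀ j, p (j + 1) = p j - a • g (p j)) (hq : ∀ j, q (j + 1) = q j - a • g (q j))
    (n : ℕ) :
    ‖descentJacobian g a p n (g (p n)) - descentJacobian g a q n (g (q n))‖
      ≤ ((1 + a * L) ^ (2 * n) * L + a * ρ * (1 + a * L) ^ (n - 1)
          * (∑ j ∈ Finset.range n, (1 + a * L) ^ j) * (1 + a * L) ^ n * ‖g (p 0)‖)
        * ‖p 0 - q 0‖ := by
  set Jp := descentJacobian g a p n
  set Jq := descentJacobian g a q n
  have hsplit : Jp (g (p n)) - Jq (g (q n)) = (Jp - Jq) (g (p n)) + Jq (g (p n) - g (q n)) := by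
    simp only [sub_apply, map_sub]; abel
  have hpath : ‖g (p n) - g (q n)‖ ≤ L * ((1 + a * L) ^ n * ‖p 0 - q 0‖) :=
    (hgL _ _).trans (by gcongr; exact norm_descent_sub_le ha hL hgL hp hq n)
  calc _ ≤ ‖Jp - Jq‖ * ‖g (p n)‖ + ‖Jq‖ * ‖g (p n) - g (q n)‖ := by
        rw [hsplit]
        grw [norm_add_le, ContinuousLinearMap.le_opNorm, ContinuousLinearMap.le_opNorm]
    _ ≤ a * ρ * (1 + a * L) ^ (n - 1) * (∑ j ∈ Finset.range n, (1 + a * L) ^ j)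
          * ‖p 0 - q 0‖ * ((1 + a * L) ^ n * ‖g (p 0)‖)
        + (1 + a * L) ^ n * (L * ((1 + a * L) ^ n * ‖p 0 - q 0‖)) := by
        gcongr
        · exact norm_descentJacobian_sub_le ha hL hρ hgL hgρ hp hq n
        · exact norm_apply_descent_le ha hL hgL hp n
        · exact norm_descentJacobian_le ha hL hgL q n
    _ = _ := by ring

end DescentJacobian

theorem maml_constant_eq_geom_sum {α L ρ : ℝ} {N : ℕ} (hL : L ≠ 0) (hN : 1 ≤ N) :
    ((1 + α * L) ^ (N - 1) * (α * ρ)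
      + (ρ / L) * (1 + α * L) ^ N * ((1 + α * L) ^ (N - 1) - 1)) * (1 + α * L) ^ N
      = α * ρ * (1 + α * L) ^ (N - 1) * (∑ j ∈ Finset.range N, (1 + α * L) ^ j)
        * (1 + α * L) ^ N := by
  obtain ⟨n, rfl⟩ : ∃ n, N = n + 1 := ⟨N - 1, by omega⟩
  have hgeom := geom_sum_mul (1 + α * L) n
  have hρL : ρ / L * ((1 + α * L) ^ n - 1)
      = α * ρ * ∑ j ∈ Finset.range n, (1 + α * L) ^ j := by
    rw [← hgeom]; field_simp; ring
  rw [Nat.add_sub_cancel, Finset.sum_range_succ, mul_right_comm (ρ / L), hρL]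
  linear_combination (α * ρ * (1 + α * L) ^ (n + 1) * (1 + α * L) ^ n) * hgeom

section Integral

variable {ι V : Type*} [MeasurableSpace ι] {P : Measure ι} [IsProbabilityMeasure P]
  [NormedAddCommGroup V] [NormedSpace ℝ V]

theorem norm_integral_sub_integral_le {F G : ι → V} {h : ι → ℝ} (hF : Integrable F P)
    (hG : Integrable G P) (hh : Integrable h P) {A B c : ℝ}
    (hFG : ∀ i, ‖F i - G i‖ ≤ (A + B * h i) * c) :
    ‖∫ i, F i ∂P - ∫ i, G i ∂P‖ ≤ (A + B * ∫ i, h i ∂P) * c := by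
  have hbound : Integrable (fun i => (A + B * h i) * c) P :=
    ((integrable_const A).add (hh.const_mul B)).mul_const c
  calc _ = ‖∫ i, F i - G i ∂P‖ := by rw [integral_sub hF hG]
    _ ≤ ∫ i, ‖F i - G i‖ ∂P := norm_integral_le_integral_norm _
    _ ≤ ∫ i, (A + B * h i) * c ∂P := integral_mono (hF.sub hG).norm hbound hFG
    _ = (A + B * ∫ i, h i ∂P) * c := by
        rw [integral_mul_const, integral_add (integrable_const A) (hh.const_mul B),
          integral_const, integral_const_mul, probReal_univ, one_smul]

end Integral

theorem maml_meta_gradient_lipschitz_general (d : ℕ) {ι : Type*} [MeasurableSpace ι]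
    (P : Measure ι) [IsProbabilityMeasure P]
    (l : ι → EuclideanSpace ℝ (Fin d) → ℝ) (L ρ α : ℝ) (N : ℕ)
    (hL : 0 < L) (hρ : 0 ≤ ρ) (hα : 0 ≤ α) (hN : 1 ≤ N)
    (hLip : ∀ i w u, ‖gradient (l i) w - gradient (l i) u‖ ≤ L * ‖w - u‖)
    (hHess : ∀ i w u,
      ‖fderiv ℝ (gradient (l i)) w - fderiv ℝ (gradient (l i)) u‖ ≤ ρ * ‖w - u‖)
    (wp : ι → EuclideanSpace ℝ (Fin d) → ℕ → EuclideanSpace ℝ (Fin d))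
    (hwp0 : ∀ i w, wp i w 0 = w)
    (hwpS : ∀ i w j, wp i w (j + 1) = wp i w j - α • gradient (l i) (wp i w j))
    (gradL : ι → EuclideanSpace ℝ (Fin d) → EuclideanSpace ℝ (Fin d))
    (hgradL : ∀ i w, gradL i w =
      (((List.range N).map (fun j =>
          (1 : EuclideanSpace ℝ (Fin d) →L[ℝ] EuclideanSpace ℝ (Fin d))
            - α • fderiv ℝ (gradient (l i)) (wp i w j))).prod)
        (gradient (l i) (wp i w N)))
    (hInt : ∀ w, Integrable (fun i => gradL i w) P)
    (hIntn : ∀ w, Integrable (fun i => ‖gradient (l i) w‖) P)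
    (C : ℝ)
    (hC : C = ((1 + α * L) ^ (N - 1) * (α * ρ)
      + (ρ / L) * (1 + α * L) ^ N * ((1 + α * L) ^ (N - 1) - 1)) * (1 + α * L) ^ N) :
    ∀ w u : EuclideanSpace ℝ (Fin d),
      ‖(∫ i, gradL i w ∂P) - ∫ i, gradL i u ∂P‖
        ≤ ((1 + α * L) ^ (2 * N) * L + C * ∫ i, ‖gradient (l i) w‖ ∂P) * ‖w - u‖ := by
  intro w u
  refine norm_integral_sub_integral_le (hInt w) (hInt u) (hIntn w) fun i => ?_
  rw [hgradL i w, hgradL i u, hC, maml_constant_eq_geom_sum hL.ne' hN]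
  have hpoint := norm_descentJacobian_apply_sub_le hα hL.le hρ (hLip i) (hHess i)
    (hwpS i w) (hwpS i u) N
  rwa [hwp0, hwp0] at hpoint

/-- Proposition 6.1: Lipschitzness of the multi-step MAML
meta-gradient in the resampling case.  Tasks are drawn from a probability measure
`P`; for each task `i`, `∇L_i(w)` is the meta gradient obtained by the chain rule
through the `N`-step inner gradient-descent path, and `∇𝓛(w) = ∫ ∇L_i(w) dP(i)`. -/
theorem maml_meta_gradient_lipschitz (d : ℕ) {ι : Type*} [MeasurableSpace ι]
    (P : Measure ι) [IsProbabilityMeasure P]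
    (l : ι → EuclideanSpace ℝ (Fin d) → ℝ) (L ρ α : ℝ) (N : ℕ)
    (hL : 0 < L) (hρ : 0 ≤ ρ) (hα : 0 ≤ α) (hN : 1 ≤ N)
    (hC2 : ∀ i, ContDiff ℝ 2 (l i))
    (hLip : ∀ i w u, ‖gradient (l i) w - gradient (l i) u‖ ≤ L * ‖w - u‖)
    (hHess : ∀ i w u,
      ‖fderiv ℝ (gradient (l i)) w - fderiv ℝ (gradient (l i)) u‖ ≤ ρ * ‖w - u‖)
    (wp : ι → EuclideanSpace ℝ (Fin d) → ℕ → EuclideanSpace ℝ (Fin d))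
    (hwp0 : ∀ i w, wp i w 0 = w)
    (hwpS : ∀ i w j, wp i w (j + 1) = wp i w j - α • gradient (l i) (wp i w j))
    (gradL : ι → EuclideanSpace ℝ (Fin d) → EuclideanSpace ℝ (Fin d))
    (hgradL : ∀ i w, gradL i w =
      (((List.range N).map (fun j =>
          (1 : EuclideanSpace ℝ (Fin d) →L[ℝ] EuclideanSpace ℝ (Fin d))
            - α • fderiv ℝ (gradient (l i)) (wp i w j))).prod)
        (gradient (l i) (wp i w N)))
    (hInt : ∀ w, Integrable (fun i => gradL i w) P)
    (hIntn : ∀ w, Integrable (fun i => ‖gradient (l i) w‖) P)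
    (C : ℝ)
    (hC : C = ((1 + α * L) ^ (N - 1) * (α * ρ)
      + (ρ / L) * (1 + α * L) ^ N * ((1 + α * L) ^ (N - 1) - 1)) * (1 + α * L) ^ N) :
    ∀ w u : EuclideanSpace ℝ (Fin d),
      ‖(∫ i, gradL i w ∂P) - ∫ i, gradL i u ∂P‖
        ≤ ((1 + α * L) ^ (2 * N) * L + C * ∫ i, ‖gradient (l i) w‖ ∂P) * ‖w - u‖ :=
  maml_meta_gradient_lipschitz_general d P l L ρ α N hL hρ hα hN hLip hHess wp hwp0 hwpS gradL
    hgradL hInt hIntn C hC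
end

section
/- (Per-task Lipschitzness of the finite-sum MAML meta-gradient.) Let l_S, l_T : ℝ^d → ℝ be twice continuously differentiable such that ∇l_S and ∇l_T are L-Lipschitz (L > 0), ∇²l_S and ∇²l_T are ρ-Lipschitz (in operator norm), and ‖∇l_S(w) − ∇l_T(w)‖ ≤ b for all w ∈ ℝ^d, where b ≥ 0. Let α ≥ 0 and N ≥ 1. For w ∈ ℝ^d let w̃_0 = w, w̃_{j+1} = w̃_j − α∇l_S(w̃_j), and ∇L(w) := (I − α∇²l_S(w̃_0))⋯(I − α∇²l_S(w̃_{N−1}))∇l_T(w̃_N) (product with the j = 0 factor leftmost). Then for all w, u ∈ ℝ^d, ‖∇L(w) − ∇L(u)‖ ≤ ( (1+αL)^{2N} L + C_b·b + C_𝓛·‖∇l_T(w)‖ )·‖w − u‖, where C_b = C_𝓛 = ( αρ + (ρ/L)·(1+αL)^{N−1} )·(1+αL)^{2N}. -/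
noncomputable section

variable {E : Type*} [NormedAddCommGroup E] [NormedSpace ℝ E]

lemma maml_prod_norm_le (A : ℕ → E →L[ℝ] E) (q : ℝ) (hq : 1 ≤ q)
    (hA : ∀ j, ‖A j‖ ≤ q) : ∀ n, ‖((List.range n).map A).prod‖ ≤ q ^ n := by
  intro n
  induction n with
  | zero => simpa [ContinuousLinearMap.one_def] using ContinuousLinearMap.norm_id_le
  | succ n ih =>
    rw [List.range_succ, List.map_append, List.prod_append]
    simp only [List.map_cons, List.map_nil, List.prod_cons, List.prod_nil, mul_one]
    calc ‖((List.range n).map A).prod * A n‖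
        ≤ ‖((List.range n).map A).prod‖ * ‖A n‖ := norm_mul_le _ _
      _ ≤ q ^ n * q := mul_le_mul ih (hA n) (norm_nonneg _)
          (pow_nonneg (le_trans zero_le_one hq) n)
      _ = q ^ (n + 1) := (pow_succ q n).symm

lemma maml_prod_sub_norm_le (A B : ℕ → E →L[ℝ] E) (q : ℝ) (hq : 1 ≤ q)
    (hA : ∀ j, ‖A j‖ ≤ q) (hB : ∀ j, ‖B j‖ ≤ q) (δ : ℕ → ℝ)
    (hδ : ∀ j, ‖A j - B j‖ ≤ δ j) :
    ∀ n, ‖((List.range n).map A).prod - ((List.range n).map B).prod‖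
      ≤ q ^ (n - 1) * ∑ j ∈ Finset.range n, δ j := by
  intro n
  induction n with
  | zero => simp
  | succ n ih =>
    have hq0 : 0 ≤ q := le_trans zero_le_one hq
    have hS : 0 ≤ ∑ j ∈ Finset.range n, δ j :=
      Finset.sum_nonneg fun j _ => le_trans (norm_nonneg _) (hδ j)
    rw [List.range_succ, List.map_append, List.map_append, List.prod_append,
      List.prod_append]
    simp only [List.map_cons, List.map_nil, List.prod_cons, List.prod_nil, mul_one]
    set PA := ((List.range n).map A).prod with hPA
    set PB := ((List.range n).map B).prod with hPB
    have key : PA * A n - PB * B n = PA * (A n - B n) + (PA - PB) * B n := by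
      rw [mul_sub, sub_mul]; abel
    rw [key]
    have h1 : ‖PA * (A n - B n)‖ ≤ q ^ n * δ n :=
      le_trans (norm_mul_le _ _)
        (mul_le_mul (maml_prod_norm_le A q hq hA n) (hδ n) (norm_nonneg _)
          (pow_nonneg hq0 n))
    have h2 : ‖(PA - PB) * B n‖ ≤ q ^ n * ∑ j ∈ Finset.range n, δ j := by
      rcases Nat.eq_zero_or_pos n with h | h
      · subst h
        simp [hPA, hPB]
      · have hm : ‖PA - PB‖ * ‖B n‖ ≤ (q ^ (n - 1) * ∑ j ∈ Finset.range n, δ j) * q :=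
          mul_le_mul ih (hB n) (norm_nonneg _) (by positivity)
        have hpow : q ^ (n - 1) * q = q ^ n := by
          rw [← pow_succ]; congr 1; omega
        calc ‖(PA - PB) * B n‖ ≤ ‖PA - PB‖ * ‖B n‖ := norm_mul_le _ _
          _ ≤ (q ^ (n - 1) * ∑ j ∈ Finset.range n, δ j) * q := hm
          _ = q ^ n * ∑ j ∈ Finset.range n, δ j := by rw [mul_right_comm, hpow]
    calc ‖PA * (A n - B n) + (PA - PB) * B n‖
        ≤ ‖PA * (A n - B n)‖ + ‖(PA - PB) * B n‖ := norm_add_le _ _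
      _ ≤ q ^ n * δ n + q ^ n * ∑ j ∈ Finset.range n, δ j := add_le_add h1 h2
      _ = q ^ (n + 1 - 1) * ∑ j ∈ Finset.range (n + 1), δ j := by
          rw [Finset.sum_range_succ, Nat.add_sub_cancel]; ring

set_option maxHeartbeats 1000000 in
/-- Proposition 6.5: per-task Lipschitzness of the finite-sum MAML
meta-gradient.  The inner loop runs `N` steps of gradient descent on the training
loss `l_S` starting from `w`, and `∇L(w)` is the meta gradient of
`w ↦ l_T(w̃_N(w))`. -/
theorem finite_sum_maml_meta_gradient_lipschitz (d : ℕ)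
    (lS lT : EuclideanSpace ℝ (Fin d) → ℝ) (L ρ b α : ℝ) (N : ℕ)
    (hL : 0 < L) (hρ : 0 ≤ ρ) (hb : 0 ≤ b) (hα : 0 ≤ α) (hN : 1 ≤ N)
    (hCS : ContDiff ℝ 2 lS) (hCT : ContDiff ℝ 2 lT)
    (hLipS : ∀ w u, ‖gradient lS w - gradient lS u‖ ≤ L * ‖w - u‖)
    (hLipT : ∀ w u, ‖gradient lT w - gradient lT u‖ ≤ L * ‖w - u‖)
    (hHS : ∀ w u, ‖fderiv ℝ (gradient lS) w - fderiv ℝ (gradient lS) u‖ ≤ ρ * ‖w - u‖)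
    (hHT : ∀ w u, ‖fderiv ℝ (gradient lT) w - fderiv ℝ (gradient lT) u‖ ≤ ρ * ‖w - u‖)
    (hST : ∀ w, ‖gradient lS w - gradient lT w‖ ≤ b)
    (wp : EuclideanSpace ℝ (Fin d) → ℕ → EuclideanSpace ℝ (Fin d))
    (hwp0 : ∀ w, wp w 0 = w)
    (hwpS : ∀ w j, wp w (j + 1) = wp w j - α • gradient lS (wp w j))
    (gradL : EuclideanSpace ℝ (Fin d) → EuclideanSpace ℝ (Fin d))
    (hgradL : ∀ w, gradL w =
      (((List.range N).map (fun j =>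
          (1 : EuclideanSpace ℝ (Fin d) →L[ℝ] EuclideanSpace ℝ (Fin d))
            - α • fderiv ℝ (gradient lS) (wp w j))).prod)
        (gradient lT (wp w N)))
    (Cb C𝓛 : ℝ)
    (hCb : Cb = (α * ρ + (ρ / L) * (1 + α * L) ^ (N - 1)) * (1 + α * L) ^ (2 * N))
    (hC𝓛 : C𝓛 = (α * ρ + (ρ / L) * (1 + α * L) ^ (N - 1)) * (1 + α * L) ^ (2 * N)) :
    ∀ w u : EuclideanSpace ℝ (Fin d),
      ‖gradL w - gradL u‖
        ≤ ((1 + α * L) ^ (2 * N) * L + Cb * b + C𝓛 * ‖gradient lT w‖) * ‖w - u‖ := by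
  intro w u
  set q : ℝ := 1 + α * L with hqdef
  have hq : 1 ≤ q := by nlinarith
  have hq0 : 0 ≤ q := le_trans zero_le_one hq
  -- Hessian operator norm bound from Lipschitz gradient
  have hH : ∀ x, ‖fderiv ℝ (gradient lS) x‖ ≤ L := by
    intro x
    have hlip : LipschitzWith L.toNNReal (gradient lS) := by
      apply LipschitzWith.of_dist_le_mul
      intro a c
      rw [dist_eq_norm, dist_eq_norm]
      simpa [Real.coe_toNNReal L hL.le] using hLipS a c
    have h := norm_fderiv_le_of_lipschitz ℝ hlip (x₀ := x)
    rwa [Real.coe_toNNReal L hL.le] at h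
  -- norm bound on the factors
  have hfac : ∀ x : EuclideanSpace ℝ (Fin d),
      ‖(1 : EuclideanSpace ℝ (Fin d) →L[ℝ] EuclideanSpace ℝ (Fin d))
        - α • fderiv ℝ (gradient lS) x‖ ≤ q := by
    intro x
    calc ‖(1 : EuclideanSpace ℝ (Fin d) →L[ℝ] EuclideanSpace ℝ (Fin d))
          - α • fderiv ℝ (gradient lS) x‖
        ≤ ‖(1 : EuclideanSpace ℝ (Fin d) →L[ℝ] EuclideanSpace ℝ (Fin d))‖
          + ‖α • fderiv ℝ (gradient lS) x‖ := norm_sub_le _ _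
      _ ≤ 1 + α * L := by
          refine add_le_add ?_ ?_
          · rw [ContinuousLinearMap.one_def]
            exact ContinuousLinearMap.norm_id_le
          · rw [norm_smul, Real.norm_of_nonneg hα]
            exact mul_le_mul_of_nonneg_left (hH x) hα
  -- Lipschitzness of the inner iterates
  have hiter : ∀ j, ‖wp w j - wp u j‖ ≤ q ^ j * ‖w - u‖ := by
    intro j
    induction j with
    | zero => simp [hwp0]
    | succ j ih =>
      rw [hwpS w j, hwpS u j]
      have : wp w j - α • gradient lS (wp w j) - (wp u j - α • gradient lS (wp u j))
          = (wp w j - wp u j) - α • (gradient lS (wp w j) - gradient lS (wp u j)) := by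
        rw [smul_sub]; abel
      rw [this]
      calc ‖(wp w j - wp u j) - α • (gradient lS (wp w j) - gradient lS (wp u j))‖
          ≤ ‖wp w j - wp u j‖ + ‖α • (gradient lS (wp w j) - gradient lS (wp u j))‖ :=
            norm_sub_le _ _
        _ ≤ ‖wp w j - wp u j‖ + α * (L * ‖wp w j - wp u j‖) := by
            refine add_le_add le_rfl ?_
            rw [norm_smul, Real.norm_of_nonneg hα]
            exact mul_le_mul_of_nonneg_left (hLipS _ _) hα
        _ = q * ‖wp w j - wp u j‖ := by ring
        _ ≤ q * (q ^ j * ‖w - u‖) := mul_le_mul_of_nonneg_left ih hq0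
        _ = q ^ (j + 1) * ‖w - u‖ := by ring
  -- growth of the training gradient along the iterates
  have hgrow : ∀ j, ‖gradient lS (wp w j)‖ ≤ q ^ j * ‖gradient lS w‖ := by
    intro j
    induction j with
    | zero => simp [hwp0]
    | succ j ih =>
      rw [hwpS w j]
      have hx : wp w j - α • gradient lS (wp w j) - wp w j
          = -(α • gradient lS (wp w j)) := by abel
      calc ‖gradient lS (wp w j - α • gradient lS (wp w j))‖
          = ‖(gradient lS (wp w j - α • gradient lS (wp w j)) - gradient lS (wp w j))
            + gradient lS (wp w j)‖ := by rw [sub_add_cancel]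
        _ ≤ ‖gradient lS (wp w j - α • gradient lS (wp w j)) - gradient lS (wp w j)‖
            + ‖gradient lS (wp w j)‖ := norm_add_le _ _
        _ ≤ L * ‖wp w j - α • gradient lS (wp w j) - wp w j‖ + ‖gradient lS (wp w j)‖ :=
            add_le_add (hLipS _ _) le_rfl
        _ = L * (α * ‖gradient lS (wp w j)‖) + ‖gradient lS (wp w j)‖ := by
            rw [hx, norm_neg, norm_smul, Real.norm_of_nonneg hα]
        _ = q * ‖gradient lS (wp w j)‖ := by ring
        _ ≤ q * (q ^ j * ‖gradient lS w‖) := mul_le_mul_of_nonneg_left ih hq0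
        _ = q ^ (j + 1) * ‖gradient lS w‖ := by ring
  -- the two operator products
  set A : ℕ → EuclideanSpace ℝ (Fin d) →L[ℝ] EuclideanSpace ℝ (Fin d) := fun j =>
    (1 : EuclideanSpace ℝ (Fin d) →L[ℝ] EuclideanSpace ℝ (Fin d))
      - α • fderiv ℝ (gradient lS) (wp w j) with hAdef
  set B : ℕ → EuclideanSpace ℝ (Fin d) →L[ℝ] EuclideanSpace ℝ (Fin d) := fun j =>
    (1 : EuclideanSpace ℝ (Fin d) →L[ℝ] EuclideanSpace ℝ (Fin d))
      - α • fderiv ℝ (gradient lS) (wp u j) with hBdef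
  have hAn : ∀ j, ‖A j‖ ≤ q := fun j => hfac _
  have hBn : ∀ j, ‖B j‖ ≤ q := fun j => hfac _
  have hδ : ∀ j, ‖A j - B j‖ ≤ α * ρ * (q ^ j * ‖w - u‖) := by
    intro j
    have : A j - B j = α • (fderiv ℝ (gradient lS) (wp u j)
        - fderiv ℝ (gradient lS) (wp w j)) := by
      rw [hAdef, hBdef]; simp only; rw [smul_sub]; abel
    rw [this]
    have hns : ‖α • (fderiv ℝ (gradient lS) (wp u j) - fderiv ℝ (gradient lS) (wp w j))‖
        = α * ‖fderiv ℝ (gradient lS) (wp u j) - fderiv ℝ (gradient lS) (wp w j)‖ := by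
      rw [norm_smul, Real.norm_of_nonneg hα]
    rw [hns]
    calc α * ‖fderiv ℝ (gradient lS) (wp u j) - fderiv ℝ (gradient lS) (wp w j)‖
        ≤ α * (ρ * ‖wp u j - wp w j‖) := mul_le_mul_of_nonneg_left (hHS _ _) hα
      _ ≤ α * (ρ * (q ^ j * ‖w - u‖)) := by
          refine mul_le_mul_of_nonneg_left (mul_le_mul_of_nonneg_left ?_ hρ) hα
          rw [norm_sub_rev]; exact hiter j
      _ = α * ρ * (q ^ j * ‖w - u‖) := by ring
  have hPdiff := maml_prod_sub_norm_le A B q hq hAn hBn _ hδ N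
  -- geometric sum identity
  have hgeom : α * ∑ j ∈ Finset.range N, q ^ j = (q ^ N - 1) / L := by
    have h := geom_sum_mul q N
    have : (∑ j ∈ Finset.range N, q ^ j) * (α * L) = q ^ N - 1 := by
      rw [hqdef] at h ⊢; ring_nf at h ⊢; linarith
    field_simp
    linarith
  have hsum : ∑ j ∈ Finset.range N, α * ρ * (q ^ j * ‖w - u‖)
      = ρ * ((q ^ N - 1) / L) * ‖w - u‖ := by
    calc ∑ j ∈ Finset.range N, α * ρ * (q ^ j * ‖w - u‖)
        = (∑ j ∈ Finset.range N, q ^ j) * (α * ρ * ‖w - u‖) := by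
          rw [Finset.sum_mul]
          exact Finset.sum_congr rfl fun j _ => by ring
      _ = ρ * (α * ∑ j ∈ Finset.range N, q ^ j) * ‖w - u‖ := by ring
      _ = ρ * ((q ^ N - 1) / L) * ‖w - u‖ := by rw [hgeom]
  rw [hsum] at hPdiff
  -- remaining norms
  have hQ1 : 1 ≤ q ^ N := one_le_pow₀ hq
  have hQ0 : (0:ℝ) ≤ q ^ N := pow_nonneg hq0 N
  have hR0 : (0:ℝ) ≤ q ^ (N - 1) := pow_nonneg hq0 _
  have hPBn : ‖((List.range N).map B).prod‖ ≤ q ^ N := maml_prod_norm_le B q hq hBn N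
  have hgdiff : ‖gradient lT (wp w N) - gradient lT (wp u N)‖ ≤ L * (q ^ N * ‖w - u‖) :=
    le_trans (hLipT _ _) (mul_le_mul_of_nonneg_left (hiter N) hL.le)
  have hgw : ‖gradient lT (wp w N)‖ ≤ q ^ N * ‖gradient lT w‖ + (q ^ N + 1) * b := by
    have h1 : ‖gradient lT (wp w N)‖ ≤ b + ‖gradient lS (wp w N)‖ := by
      calc ‖gradient lT (wp w N)‖
          = ‖(gradient lT (wp w N) - gradient lS (wp w N)) + gradient lS (wp w N)‖ := by
            rw [sub_add_cancel]
        _ ≤ ‖gradient lT (wp w N) - gradient lS (wp w N)‖ + ‖gradient lS (wp w N)‖ :=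
            norm_add_le _ _
        _ ≤ b + ‖gradient lS (wp w N)‖ := by
            rw [norm_sub_rev]; exact add_le_add (hST _) le_rfl
    have h2 : ‖gradient lS w‖ ≤ b + ‖gradient lT w‖ := by
      calc ‖gradient lS w‖
          = ‖(gradient lS w - gradient lT w) + gradient lT w‖ := by rw [sub_add_cancel]
        _ ≤ ‖gradient lS w - gradient lT w‖ + ‖gradient lT w‖ := norm_add_le _ _
        _ ≤ b + ‖gradient lT w‖ := add_le_add (hST _) le_rfl
    have h3 := hgrow N
    nlinarith [mul_le_mul_of_nonneg_left h2 hQ0]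
  -- decomposition of the meta-gradient difference
  have hkey : gradL w - gradL u
      = (((List.range N).map B).prod) (gradient lT (wp w N) - gradient lT (wp u N))
        + ((((List.range N).map A).prod - ((List.range N).map B).prod))
            (gradient lT (wp w N)) := by
    rw [hgradL w, hgradL u, ← hAdef, ← hBdef]
    rw [map_sub, ContinuousLinearMap.sub_apply]
    abel
  have hs0 : (0:ℝ) ≤ ρ / L := div_nonneg hρ hL.le
  have hD0 : (0:ℝ) ≤ q ^ (N - 1) * (ρ * ((q ^ N - 1) / L) * ‖w - u‖) := by
    refine mul_nonneg hR0 (mul_nonneg (mul_nonneg hρ ?_) (norm_nonneg _))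
    exact div_nonneg (sub_nonneg.2 hQ1) hL.le
  have need1 : q ^ (N - 1) * ((ρ / L) * (q ^ N - 1)) * (q ^ N + 1)
      ≤ (α * ρ + ρ / L * q ^ (N - 1)) * (q ^ N * q ^ N) := by
    nlinarith [mul_nonneg hs0 hR0, mul_nonneg (mul_nonneg hα hρ) (mul_nonneg hQ0 hQ0)]
  have need2 : q ^ (N - 1) * ((ρ / L) * (q ^ N - 1)) * q ^ N
      ≤ (α * ρ + ρ / L * q ^ (N - 1)) * (q ^ N * q ^ N) := by
    nlinarith [mul_nonneg hs0 hR0, mul_nonneg (mul_nonneg hα hρ) (mul_nonneg hQ0 hQ0),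
      mul_nonneg (mul_nonneg hs0 hR0) hQ0]
  have hG0 : (0:ℝ) ≤ ‖gradient lT w‖ := norm_nonneg _
  have h2N : q ^ (2 * N) = q ^ N * q ^ N := by rw [two_mul, pow_add]
  have hmain : q ^ N * (L * q ^ N)
        + (q ^ (N - 1) * ((ρ / L) * (q ^ N - 1)))
          * (q ^ N * ‖gradient lT w‖ + (q ^ N + 1) * b)
      ≤ q ^ N * q ^ N * L + (α * ρ + ρ / L * q ^ (N - 1)) * (q ^ N * q ^ N) * b
        + (α * ρ + ρ / L * q ^ (N - 1)) * (q ^ N * q ^ N) * ‖gradient lT w‖ := by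
    nlinarith [mul_le_mul_of_nonneg_right need2 hG0, mul_le_mul_of_nonneg_right need1 hb]
  calc ‖gradL w - gradL u‖
      ≤ ‖(((List.range N).map B).prod) (gradient lT (wp w N) - gradient lT (wp u N))‖
        + ‖((((List.range N).map A).prod - ((List.range N).map B).prod))
            (gradient lT (wp w N))‖ := by rw [hkey]; exact norm_add_le _ _
    _ ≤ ‖((List.range N).map B).prod‖ * ‖gradient lT (wp w N) - gradient lT (wp u N)‖
        + ‖((List.range N).map A).prod - ((List.range N).map B).prod‖
          * ‖gradient lT (wp w N)‖ :=
        add_le_add (ContinuousLinearMap.le_opNorm _ _) (ContinuousLinearMap.le_opNorm _ _)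
    _ ≤ q ^ N * (L * (q ^ N * ‖w - u‖))
        + (q ^ (N - 1) * (ρ * ((q ^ N - 1) / L) * ‖w - u‖))
          * (q ^ N * ‖gradient lT w‖ + (q ^ N + 1) * b) :=
        add_le_add (mul_le_mul hPBn hgdiff (norm_nonneg _) hQ0)
          (mul_le_mul hPdiff hgw (norm_nonneg _) hD0)
    _ = (q ^ N * (L * q ^ N)
        + (q ^ (N - 1) * ((ρ / L) * (q ^ N - 1)))
          * (q ^ N * ‖gradient lT w‖ + (q ^ N + 1) * b)) * ‖w - u‖ := by ring
    _ ≤ (q ^ N * q ^ N * L + (α * ρ + ρ / L * q ^ (N - 1)) * (q ^ N * q ^ N) * b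
        + (α * ρ + ρ / L * q ^ (N - 1)) * (q ^ N * q ^ N) * ‖gradient lT w‖) * ‖w - u‖ :=
        mul_le_mul_of_nonneg_right hmain (norm_nonneg _)
    _ = (q ^ (2 * N) * L + Cb * b + C𝓛 * ‖gradient lT w‖) * ‖w - u‖ := by
        rw [hCb, hC𝓛, h2N]
end
end
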